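/- arXiv:1408.3287 — 7 statements merged into one kernel-verified Lean document; each statement's English description precedes it below -/
import Mathlib

section
/- Let a be a nonzero real number and n ≥ 1. Then the determinant of the n×n circulant matrix circ(a, a², a³, …, aⁿ) equals aⁿ(1 - aⁿ)^{n-1}. -/
/-- The determinant of the circulant matrix `circ(a, a², …, aⁿ)` equals
`aⁿ (1 - aⁿ)^(n-1)`. The `(i,j)`-entry of the circulant matrix is
`v_{j-i+1}` when `j ≥ i` and `v_{n+j-i+1}` otherwise, i.e. `v_{((j-i) mod n)+1}`. -/
theorem det_circulant_geometric (n : ℕ) (hn : 1 ≤ n) (a : ℝ) (ha : a ≠ 0) :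
    Matrix.det (Matrix.of fun i j : Fin n => a ^ (((j : ℕ) + n - (i : ℕ)) % n + 1)) =
      a ^ n * (1 - a ^ n) ^ (n - 1) := by
  obtain ⟨m, rfl⟩ : ∃ m, n = m + 1 := ⟨n - 1, (Nat.succ_pred_eq_of_pos hn).symm⟩
  set n := m + 1 with hn'
  set b : ℝ := a ^ n with hb
  set M : Matrix (Fin n) (Fin n) ℝ :=
    Matrix.of fun i j : Fin n => a ^ (((j : ℕ) + n - (i : ℕ)) % n + 1) with hM
  set D : Matrix (Fin n) (Fin n) ℝ := Matrix.diagonal fun i : Fin n => a ^ (i : ℕ) with hD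
  set P : Matrix (Fin n) (Fin n) ℝ :=
    Matrix.of fun i j : Fin n => if (i : ℕ) ≤ (j : ℕ) then (1 : ℝ) else b with hP
  have hDdet : D.det ≠ 0 := by
    rw [hD, Matrix.det_diagonal]
    exact Finset.prod_ne_zero_iff.mpr fun i _ => pow_ne_zero _ ha
  -- Conjugation: D * M = (a • P) * D
  have key : D * M = (a • P) * D := by
    ext i j
    rw [hD, Matrix.diagonal_mul, Matrix.mul_diagonal]
    have hj : (j : ℕ) < n := j.isLt
    have hi : (i : ℕ) < n := i.isLt
    rcases le_or_gt (i : ℕ) (j : ℕ) with h | h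
    · have hmod : ((j : ℕ) + n - (i : ℕ)) % n = (j : ℕ) - (i : ℕ) := by
        have h1 : (j : ℕ) + n - (i : ℕ) = ((j : ℕ) - (i : ℕ)) + n := by omega
        rw [h1, Nat.add_mod_right, Nat.mod_eq_of_lt (by omega)]
      simp only [hM, hP, Matrix.of_apply, Matrix.smul_apply, if_pos h, smul_eq_mul, mul_one]
      rw [hmod, ← pow_add, ← pow_succ']
      congr 1
      omega
    · have hmod : ((j : ℕ) + n - (i : ℕ)) % n = (j : ℕ) + n - (i : ℕ) :=
        Nat.mod_eq_of_lt (by omega)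
      simp only [hM, hP, Matrix.of_apply, Matrix.smul_apply, if_neg (by omega : ¬ (i:ℕ) ≤ (j:ℕ)),
        smul_eq_mul, hb]
      rw [hmod, ← pow_add, ← pow_succ', ← pow_add]
      congr 1
      omega
  have hdetM : M.det = (a • P).det := by
    have := congrArg Matrix.det key
    rw [Matrix.det_mul, Matrix.det_mul] at this
    have h2 : D.det * M.det = D.det * (a • P).det := by
      rw [this]; ring
    exact mul_left_cancel₀ hDdet h2
  -- Column reduction of P
  set T : Matrix (Fin n) (Fin n) ℝ :=
    Matrix.of fun i j : Fin n =>
      if j = 0 then (if i = 0 then (1 : ℝ) else b)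
      else if i = j then 1 - b else 0 with hT
  have hPT : P.det = T.det := by
    apply Matrix.det_eq_of_forall_col_eq_smul_add_pred (fun _ => (1 : ℝ))
    · intro i
      rcases eq_or_ne i 0 with rfl | h0
      · simp [hP, hT]
      · have h0' : ¬ (i : ℕ) ≤ ((0 : Fin n) : ℕ) := by
          simp only [Fin.val_zero, Nat.le_zero]
          exact fun h => h0 (Fin.ext h)
        simp [hP, hT, h0, h0']
    · intro i j
      have hjs : (j.succ : Fin n) ≠ 0 := Fin.succ_ne_zero j
      simp only [hP, hT, Matrix.of_apply, if_neg hjs, one_mul]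
      have hcs : ((Fin.castSucc j : Fin n) : ℕ) = (j : ℕ) := rfl
      have hs : ((Fin.succ j : Fin n) : ℕ) = (j : ℕ) + 1 := rfl
      rcases lt_trichotomy (i : ℕ) ((j : ℕ) + 1) with h | h | h
      · -- i ≤ j
        rw [if_pos (by omega : (i:ℕ) ≤ ((Fin.succ j : Fin n) : ℕ)),
          if_pos (by omega : (i:ℕ) ≤ ((Fin.castSucc j : Fin n) : ℕ)),
          if_neg (by simp [Fin.ext_iff, hs]; omega)]
        ring
      · -- i = j + 1
        rw [if_pos (by omega : (i:ℕ) ≤ ((Fin.succ j : Fin n) : ℕ)),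
          if_neg (by omega : ¬ (i:ℕ) ≤ ((Fin.castSucc j : Fin n) : ℕ)),
          if_pos (by simp [Fin.ext_iff, hs]; omega)]
        ring
      · -- i > j + 1
        rw [if_neg (by omega : ¬ (i:ℕ) ≤ ((Fin.succ j : Fin n) : ℕ)),
          if_neg (by omega : ¬ (i:ℕ) ≤ ((Fin.castSucc j : Fin n) : ℕ)),
          if_neg (by simp [Fin.ext_iff, hs]; omega)]
        ring
  have hTtri : T.BlockTriangular OrderDual.toDual := by
    intro i j hij
    have hij' : (i : Fin n) < j := hij
    have hj0 : j ≠ 0 := by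
      intro h; rw [h] at hij'; exact absurd hij' (Fin.not_lt_zero i)
    simp only [hT, Matrix.of_apply, if_neg hj0, if_neg (ne_of_lt hij')]
  have hTdet : T.det = (1 - b) ^ m := by
    rw [Matrix.det_of_lowerTriangular T hTtri, Fin.prod_univ_succ]
    simp [hT, Fin.succ_ne_zero]
  rw [hdetM, Matrix.det_smul, hPT, hTdet]
  simp [hb, hn']
end

section
/- Let Fₖ denote the Fibonacci numbers with F₁ = F₂ = 1, and let n > 3. Then det(circ(F₁, F₂, …, Fₙ)) = (1 - F_{n+1})^{n-1} + Fₙ^{n-2} · Σ_{k=1}^{n-1} Fₖ · ((1 - F_{n+1})/Fₙ)^{k-1}. -/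
open Matrix in
lemma det_aux {m : ℕ} (C : Matrix (Fin (m+2)) (Fin (m+2)) ℝ)
    (hC : ∀ i j : Fin (m+2), (j:ℕ) < (i:ℕ) → (j:ℕ) < m → C i j = 0) :
    C.det = (∏ i : Fin m, C (Fin.castLE (by omega) i) (Fin.castLE (by omega) i)) *
      (C ⟨m, by omega⟩ ⟨m, by omega⟩ * C ⟨m+1, by omega⟩ ⟨m+1, by omega⟩ -
       C ⟨m, by omega⟩ ⟨m+1, by omega⟩ * C ⟨m+1, by omega⟩ ⟨m, by omega⟩) := by
  have hcoel : ∀ i : Fin m, ((finSumFinEquiv (n := 2) (Sum.inl i) : Fin (m+2)) : ℕ) = (i : ℕ) := by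
    intro i; simp
  have hcoer : ∀ i : Fin 2, ((finSumFinEquiv (m := m) (Sum.inr i) : Fin (m+2)) : ℕ) = m + i := by
    intro i; simp
  have h1 : C.det = (C.submatrix finSumFinEquiv finSumFinEquiv).det :=
    (Matrix.det_submatrix_equiv_self _ _).symm
  set M' := C.submatrix (finSumFinEquiv (m := m) (n := 2)) finSumFinEquiv with hM'
  have htb : M'.toBlocks₂₁ = 0 := by
    ext i j
    simp only [Matrix.toBlocks₂₁, Matrix.of_apply, Matrix.zero_apply, hM', Matrix.submatrix_apply]
    apply hC
    · rw [hcoel, hcoer]; omega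
    · rw [hcoel]; exact j.isLt
  rw [h1, ← Matrix.fromBlocks_toBlocks M', htb, Matrix.det_fromBlocks_zero₂₁]
  congr 1
  · rw [Matrix.det_of_upperTriangular]
    · apply Finset.prod_congr rfl
      intro i _
      simp only [Matrix.toBlocks₁₁, Matrix.of_apply, hM', Matrix.submatrix_apply]
      congr 1 <;> · apply Fin.ext; rw [hcoel]; rfl
    · intro i j hij
      simp only [Matrix.toBlocks₁₁, Matrix.of_apply, hM', Matrix.submatrix_apply]
      apply hC
      · rw [hcoel, hcoel]; exact hij
      · rw [hcoel]; exact j.isLt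
  · rw [Matrix.det_fin_two]
    simp only [Matrix.toBlocks₂₂, Matrix.of_apply, hM', Matrix.submatrix_apply]
    have e0 : (finSumFinEquiv (m := m) (Sum.inr (0 : Fin 2))) = (⟨m, by omega⟩ : Fin (m+2)) := by
      apply Fin.ext; rw [hcoer]; rfl
    have e1 : (finSumFinEquiv (m := m) (Sum.inr (1 : Fin 2))) = (⟨m+1, by omega⟩ : Fin (m+2)) := by
      apply Fin.ext; rw [hcoer]; rfl
    rw [e0, e1]


noncomputable def dSeq (F : ℕ → ℝ) (a b : ℝ) : ℕ → ℝ
  | 0 => -(F 1)/a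
  | (j+1) => -(F (j+2) + b * dSeq F a b j)/a

lemma dSeq_closed (F : ℕ → ℝ) (a b : ℝ) (ha : a ≠ 0) (j : ℕ) :
    a^(j+1) * dSeq F a b j =
      -∑ k ∈ Finset.range (j+1), F (k+1) * (-b)^(j-k) * a^k := by
  induction j with
  | zero => simp [dSeq]; field_simp
  | succ j ih =>
    rw [Finset.sum_range_succ]
    have hd : dSeq F a b (j+1) = -(F (j+2) + b * dSeq F a b j)/a := rfl
    have : a^(j+1+1) * dSeq F a b (j+1) = -a^(j+1) * (F (j+2) + b * dSeq F a b j) := by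
      rw [hd]; field_simp; ring
    rw [this]
    have h2 : ∀ k ∈ Finset.range (j+1), F (k+1) * (-b)^(j+1-k) * a^k
        = (-b) * (F (k+1) * (-b)^(j-k) * a^k) := by
      intro k hk
      simp only [Finset.mem_range] at hk
      rw [show j+1-k = (j-k)+1 by omega, pow_succ]
      ring
    rw [Finset.sum_congr rfl h2, ← Finset.mul_sum]
    simp only [Nat.sub_self, pow_zero, mul_one]
    linear_combination (-b) * ih


lemma sum_single_ite (n t : ℕ) (ht : t < n) (f : ℕ → ℝ) :
    ∑ k ∈ Finset.range n, (if k = t then f k else 0) = f t := by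
  rw [Finset.sum_ite_eq' (Finset.range n) t f, if_pos (Finset.mem_range.mpr ht)]

def Emat (n : ℕ) : Matrix (Fin n) (Fin n) ℝ := Matrix.of (fun i k : Fin n =>
  (if k = i then (1:ℝ) else 0)
  - (if h : (i:ℕ)+1 < n then (if k = ⟨(i:ℕ)+1, h⟩ then 1 else 0) else 0)
  - (if h : (i:ℕ)+2 < n then (if k = ⟨(i:ℕ)+2, h⟩ then 1 else 0) else 0))

noncomputable def E2mat (n : ℕ) (d v : ℕ → ℝ) : Matrix (Fin n) (Fin n) ℝ :=
  Matrix.of (fun i k : Fin n =>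
    (if k = i then (1:ℝ) else 0) +
    (if (i:ℕ) = n-2 ∧ (k:ℕ) < n-2 then d (k:ℕ)
     else if (i:ℕ) = n-1 ∧ (k:ℕ) < n-2 then v (k:ℕ) else 0))

noncomputable def Bmat (n : ℕ) (F : ℕ → ℝ) (a b : ℝ) : Matrix (Fin n) (Fin n) ℝ :=
  Matrix.of (fun i j : Fin n =>
    if (i:ℕ)+2 < n then (if (j:ℕ) = (i:ℕ) then a else if (j:ℕ) = (i:ℕ)+1 then b else 0)
    else if (i:ℕ)+2 = n then
      (if (j:ℕ) < n-2 then F ((j:ℕ)+1) else if (j:ℕ) = n-2 then 1 - F n else 0)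
    else (if (j:ℕ) < n-1 then F ((j:ℕ)+2) else 1))

noncomputable def Cmat (n : ℕ) (a b u1 v1 : ℝ) : Matrix (Fin n) (Fin n) ℝ :=
  Matrix.of (fun i j : Fin n =>
    if (i:ℕ)+2 < n then (if (j:ℕ) = (i:ℕ) then a else if (j:ℕ) = (i:ℕ)+1 then b else 0)
    else if (i:ℕ)+2 = n then (if (j:ℕ) = n-2 then u1 else 0)
    else (if (j:ℕ) = n-2 then v1 else if (j:ℕ) = n-1 then 1 else 0))

lemma fin_mk_ne {n : ℕ} (i : Fin n) (t : ℕ) (h : t < n) (hne : (i:ℕ) ≠ t) : i ≠ ⟨t, h⟩ := by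
  intro hc; apply hne; rw [hc]

lemma fin_ne_of_val_ne {n : ℕ} (i j : Fin n) (hne : (i:ℕ) ≠ (j:ℕ)) : i ≠ j := by
  intro hc; apply hne; rw [hc]

lemma det_Emat (n : ℕ) : (Emat n).det = 1 := by
  rw [Matrix.det_of_upperTriangular]
  · apply Finset.prod_eq_one
    intro i _
    simp only [Emat, Matrix.of_apply]
    have e1 : (if h : (i:ℕ)+1 < n then (if i = ⟨(i:ℕ)+1, h⟩ then (1:ℝ) else 0) else 0) = 0 := by
      split
      · rw [if_neg (fin_mk_ne _ _ _ (by omega))]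
      · rfl
    have e2 : (if h : (i:ℕ)+2 < n then (if i = ⟨(i:ℕ)+2, h⟩ then (1:ℝ) else 0) else 0) = 0 := by
      split
      · rw [if_neg (fin_mk_ne _ _ _ (by omega))]
      · rfl
    rw [if_true, e1, e2]; norm_num
  · intro i j hij
    have hij' : (j:ℕ) < (i:ℕ) := hij
    simp only [Emat, Matrix.of_apply]
    have e1 : (if h : (i:ℕ)+1 < n then (if j = ⟨(i:ℕ)+1, h⟩ then (1:ℝ) else 0) else 0) = 0 := by
      split
      · rw [if_neg (fin_mk_ne _ _ _ (by omega))]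
      · rfl
    have e2 : (if h : (i:ℕ)+2 < n then (if j = ⟨(i:ℕ)+2, h⟩ then (1:ℝ) else 0) else 0) = 0 := by
      split
      · rw [if_neg (fin_mk_ne _ _ _ (by omega))]
      · rfl
    rw [if_neg (fin_ne_of_val_ne _ _ (by omega)), e1, e2]; norm_num
  
lemma det_E2mat (n : ℕ) (d v : ℕ → ℝ) : (E2mat n d v).det = 1 := by
  rw [Matrix.det_of_lowerTriangular]
  · apply Finset.prod_eq_one
    intro i _
    simp only [E2mat, Matrix.of_apply]
    rw [if_true, if_neg (by omega), if_neg (by omega)]; norm_num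
  · intro i j hij
    have hij' : (i:ℕ) < (j:ℕ) := hij
    simp only [E2mat, Matrix.of_apply]
    rw [if_neg (fin_ne_of_val_ne _ _ (by omega)), if_neg (by omega), if_neg (by omega)]
    norm_num


def Mmat (n : ℕ) (F : ℕ → ℝ) : Matrix (Fin n) (Fin n) ℝ :=
  Matrix.of (fun i j : Fin n => F (((j : ℕ) + n - (i : ℕ)) % n + 1))

lemma Mmat_apply (n : ℕ) (F : ℕ → ℝ) (i j : Fin n) :
    Mmat n F i j = F ((if (i:ℕ) ≤ (j:ℕ) then (j:ℕ) - (i:ℕ) else (j:ℕ) + n - (i:ℕ)) + 1) := by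
  show F _ = F _
  congr 1
  have hi := i.isLt; have hj := j.isLt
  split
  · next h =>
    rw [show (j:ℕ) + n - (i:ℕ) = ((j:ℕ) - (i:ℕ)) + n by omega, Nat.add_mod_right,
      Nat.mod_eq_of_lt (by omega)]
  · next h =>
    rw [Nat.mod_eq_of_lt (by omega)]

lemma mul_EM (n : ℕ) (hn : 3 < n) (F : ℕ → ℝ) (hF1 : F 1 = 1) (hF2 : F 2 = 1)
    (hrec : ∀ k, 3 ≤ k → F k = F (k - 1) + F (k - 2)) :
    Emat n * Mmat n F = Bmat n F (1 - F (n+1)) (-(F n)) := by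
  have hFn1 : F (n+1) = F n + F (n-1) := by
    have := hrec (n+1) (by omega)
    rwa [show n+1-1 = n by omega, show n+1-2 = n-1 by omega] at this
  ext i j
  have hsum : ∀ t : Fin n, ∑ k : Fin n, (if k = t then (1:ℝ) else 0) * Mmat n F k j
      = Mmat n F t j := by
    intro t
    rw [Finset.sum_congr rfl (fun k _ => by rw [ite_mul, one_mul, zero_mul]),
      Finset.sum_ite_eq' Finset.univ t, if_pos (Finset.mem_univ t)]
  rw [Matrix.mul_apply]
  simp only [Emat, Matrix.of_apply, sub_mul]
  rw [Finset.sum_sub_distrib, Finset.sum_sub_distrib, hsum i]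
  have hi := i.isLt; have hj := j.isLt
  have h1 : (i:ℕ)+1 < n ∨ (i:ℕ)+1 = n := by omega
  -- case split on the row
  by_cases hi2 : (i:ℕ)+2 < n
  · have hi1 : (i:ℕ)+1 < n := by omega
    simp only [dif_pos hi1, dif_pos hi2]
    rw [hsum ⟨(i:ℕ)+1, hi1⟩, hsum ⟨(i:ℕ)+2, hi2⟩]
    simp only [Bmat, Matrix.of_apply, if_pos hi2]
    rw [Mmat_apply, Mmat_apply, Mmat_apply]
    show F ((if (i:ℕ) ≤ (j:ℕ) then _ else _) + 1) - F ((if (i:ℕ)+1 ≤ (j:ℕ) then (j:ℕ) - ((i:ℕ)+1) else (j:ℕ) + n - ((i:ℕ)+1)) + 1) - F ((if (i:ℕ)+2 ≤ (j:ℕ) then (j:ℕ) - ((i:ℕ)+2) else (j:ℕ) + n - ((i:ℕ)+2)) + 1) = _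
    by_cases hj1 : (j:ℕ) = (i:ℕ)
    · rw [if_pos hj1,
        show (if (i:ℕ) ≤ (j:ℕ) then (j:ℕ) - (i:ℕ) else (j:ℕ) + n - (i:ℕ)) + 1 = 1 from by
          split <;> omega,
        show (if (i:ℕ)+1 ≤ (j:ℕ) then (j:ℕ) - ((i:ℕ)+1) else (j:ℕ) + n - ((i:ℕ)+1)) + 1 = n from by
          split <;> omega,
        show (if (i:ℕ)+2 ≤ (j:ℕ) then (j:ℕ) - ((i:ℕ)+2) else (j:ℕ) + n - ((i:ℕ)+2)) + 1 = n-1 from by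
          split <;> omega,
        hF1, hFn1]
      ring
    · rw [if_neg hj1]
      by_cases hj2 : (j:ℕ) = (i:ℕ)+1
      · rw [if_pos hj2,
          show (if (i:ℕ) ≤ (j:ℕ) then (j:ℕ) - (i:ℕ) else (j:ℕ) + n - (i:ℕ)) + 1 = 2 from by
            split <;> omega,
          show (if (i:ℕ)+1 ≤ (j:ℕ) then (j:ℕ) - ((i:ℕ)+1) else (j:ℕ) + n - ((i:ℕ)+1)) + 1 = 1 from by
            split <;> omega,
          show (if (i:ℕ)+2 ≤ (j:ℕ) then (j:ℕ) - ((i:ℕ)+2) else (j:ℕ) + n - ((i:ℕ)+2)) + 1 = n from by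
            split <;> omega,
          hF1, hF2]
        ring
      · rw [if_neg hj2]
        by_cases hj3 : (i:ℕ) ≤ (j:ℕ)
        · -- j ≥ i+2
          have hj4 : (i:ℕ)+2 ≤ (j:ℕ) := by omega
          rw [show (if (i:ℕ) ≤ (j:ℕ) then (j:ℕ) - (i:ℕ) else (j:ℕ) + n - (i:ℕ)) + 1 = (j:ℕ) - (i:ℕ) + 1 from by
              split <;> omega,
            show (if (i:ℕ)+1 ≤ (j:ℕ) then (j:ℕ) - ((i:ℕ)+1) else (j:ℕ) + n - ((i:ℕ)+1)) + 1 = (j:ℕ) - (i:ℕ) from by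
              split <;> omega,
            show (if (i:ℕ)+2 ≤ (j:ℕ) then (j:ℕ) - ((i:ℕ)+2) else (j:ℕ) + n - ((i:ℕ)+2)) + 1 = (j:ℕ) - (i:ℕ) - 1 from by
              split <;> omega]
          have hr := hrec ((j:ℕ) - (i:ℕ) + 1) (by omega)
          rw [show (j:ℕ) - (i:ℕ) + 1 - 1 = (j:ℕ) - (i:ℕ) by omega,
            show (j:ℕ) - (i:ℕ) + 1 - 2 = (j:ℕ) - (i:ℕ) - 1 by omega] at hr
          linarith
        · -- j < i
          rw [show (if (i:ℕ) ≤ (j:ℕ) then (j:ℕ) - (i:ℕ) else (j:ℕ) + n - (i:ℕ)) + 1 = (j:ℕ) + n - (i:ℕ) + 1 from by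
              split <;> omega,
            show (if (i:ℕ)+1 ≤ (j:ℕ) then (j:ℕ) - ((i:ℕ)+1) else (j:ℕ) + n - ((i:ℕ)+1)) + 1 = (j:ℕ) + n - (i:ℕ) from by
              split <;> omega,
            show (if (i:ℕ)+2 ≤ (j:ℕ) then (j:ℕ) - ((i:ℕ)+2) else (j:ℕ) + n - ((i:ℕ)+2)) + 1 = (j:ℕ) + n - (i:ℕ) - 1 from by
              split <;> omega]
          have hr := hrec ((j:ℕ) + n - (i:ℕ) + 1) (by omega)
          rw [show (j:ℕ) + n - (i:ℕ) + 1 - 1 = (j:ℕ) + n - (i:ℕ) by omega,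
            show (j:ℕ) + n - (i:ℕ) + 1 - 2 = (j:ℕ) + n - (i:ℕ) - 1 by omega] at hr
          linarith
  · by_cases hi2' : (i:ℕ)+2 = n
    · have hi1 : (i:ℕ)+1 < n := by omega
      simp only [dif_pos hi1, dif_neg hi2, zero_mul, Finset.sum_const_zero]
      rw [hsum ⟨(i:ℕ)+1, hi1⟩]
      simp only [Bmat, Matrix.of_apply, if_neg hi2, if_pos hi2']
      rw [Mmat_apply, Mmat_apply]
      show F ((if (i:ℕ) ≤ (j:ℕ) then _ else _) + 1) - F ((if (i:ℕ)+1 ≤ (j:ℕ) then (j:ℕ) - ((i:ℕ)+1) else (j:ℕ) + n - ((i:ℕ)+1)) + 1) - 0 = _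
      by_cases hj1 : (j:ℕ) < n-2
      · rw [if_pos hj1,
          show (if (i:ℕ) ≤ (j:ℕ) then (j:ℕ) - (i:ℕ) else (j:ℕ) + n - (i:ℕ)) + 1 = (j:ℕ) + 3 from by
            split <;> omega,
          show (if (i:ℕ)+1 ≤ (j:ℕ) then (j:ℕ) - ((i:ℕ)+1) else (j:ℕ) + n - ((i:ℕ)+1)) + 1 = (j:ℕ) + 2 from by
            split <;> omega]
        have hr := hrec ((j:ℕ) + 3) (by omega)
        rw [show (j:ℕ) + 3 - 1 = (j:ℕ) + 2 by omega, show (j:ℕ) + 3 - 2 = (j:ℕ) + 1 by omega] at hr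
        linarith
      · rw [if_neg hj1]
        by_cases hj2 : (j:ℕ) = n-2
        · rw [if_pos hj2,
            show (if (i:ℕ) ≤ (j:ℕ) then (j:ℕ) - (i:ℕ) else (j:ℕ) + n - (i:ℕ)) + 1 = 1 from by
              split <;> omega,
            show (if (i:ℕ)+1 ≤ (j:ℕ) then (j:ℕ) - ((i:ℕ)+1) else (j:ℕ) + n - ((i:ℕ)+1)) + 1 = n from by
              split <;> omega,
            hF1]
          ring
        · rw [if_neg hj2,
            show (if (i:ℕ) ≤ (j:ℕ) then (j:ℕ) - (i:ℕ) else (j:ℕ) + n - (i:ℕ)) + 1 = 2 from by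
              split <;> omega,
            show (if (i:ℕ)+1 ≤ (j:ℕ) then (j:ℕ) - ((i:ℕ)+1) else (j:ℕ) + n - ((i:ℕ)+1)) + 1 = 1 from by
              split <;> omega,
            hF1, hF2]
          ring
    · -- i = n-1
      have hi1 : ¬ ((i:ℕ)+1 < n) := by omega
      simp only [dif_neg hi1, dif_neg hi2, zero_mul, Finset.sum_const_zero]
      simp only [Bmat, Matrix.of_apply, if_neg hi2, if_neg hi2']
      rw [Mmat_apply]
      by_cases hj1 : (j:ℕ) < n-1
      · rw [if_pos hj1,
          show (if (i:ℕ) ≤ (j:ℕ) then (j:ℕ) - (i:ℕ) else (j:ℕ) + n - (i:ℕ)) + 1 = (j:ℕ) + 2 from by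
            split <;> omega]
        ring
      · rw [if_neg hj1,
          show (if (i:ℕ) ≤ (j:ℕ) then (j:ℕ) - (i:ℕ) else (j:ℕ) + n - (i:ℕ)) + 1 = 1 from by
            split <;> omega,
          hF1]
        ring


lemma mul_E2B (n : ℕ) (hn : 3 < n) (F : ℕ → ℝ) (a b : ℝ) (d v : ℕ → ℝ)
    (hd : ∀ j, j < n-2 → F (j+1) + a * d j + (if j = 0 then 0 else b * d (j-1)) = 0)
    (hv : ∀ j, j < n-2 → F (j+2) + a * v j + (if j = 0 then 0 else b * v (j-1)) = 0) :
    E2mat n d v * Bmat n F a b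
      = Cmat n a b ((1 - F n) + b * d (n-3)) (F n + b * v (n-3)) := by
  ext i j
  have hi := i.isLt; have hj := j.isLt
  rw [Matrix.mul_apply]
  simp only [E2mat, Matrix.of_apply, add_mul]
  rw [Finset.sum_add_distrib]
  have hsum : ∑ k : Fin n, (if k = i then (1:ℝ) else 0) * Bmat n F a b k j
      = Bmat n F a b i j := by
    rw [Finset.sum_congr rfl (fun k _ => by rw [ite_mul, one_mul, zero_mul]),
      Finset.sum_ite_eq' Finset.univ i, if_pos (Finset.mem_univ i)]
  rw [hsum]
  by_cases hlt : (i:ℕ)+2 < n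
  · have hz : ∀ k : Fin n,
        (if (i:ℕ) = n-2 ∧ (k:ℕ) < n-2 then d (k:ℕ)
         else if (i:ℕ) = n-1 ∧ (k:ℕ) < n-2 then v (k:ℕ) else 0) * Bmat n F a b k j = 0 := by
      intro k
      rw [if_neg (by omega), if_neg (by omega), zero_mul]
    rw [Finset.sum_congr rfl (fun k _ => hz k), Finset.sum_const_zero, add_zero]
    simp only [Bmat, Cmat, Matrix.of_apply, if_pos hlt]
  · by_cases hi2 : (i:ℕ)+2 = n
    · -- row n-2
      have hg : ∀ k : Fin n,
          (if (i:ℕ) = n-2 ∧ (k:ℕ) < n-2 then d (k:ℕ)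
           else if (i:ℕ) = n-1 ∧ (k:ℕ) < n-2 then v (k:ℕ) else 0) * Bmat n F a b k j
          = (fun m : ℕ => if m < n-2 then
              d m * (if (j:ℕ) = m then a else if (j:ℕ) = m+1 then b else 0) else 0) (k:ℕ) := by
        intro k
        by_cases hk : (k:ℕ) < n-2
        · rw [if_pos ⟨by omega, hk⟩]
          simp only [Bmat, Matrix.of_apply, if_pos (show (k:ℕ)+2 < n by omega)]
          rw [if_pos hk]
        · rw [if_neg (by omega), if_neg (by omega), zero_mul]
          show (0:ℝ) = if (k:ℕ) < n-2 then
            d (k:ℕ) * (if (j:ℕ) = (k:ℕ) then a else if (j:ℕ) = (k:ℕ)+1 then b else 0) else 0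
          rw [if_neg hk]
      rw [Finset.sum_congr rfl (fun k _ => hg k),
        Fin.sum_univ_eq_sum_range (fun m : ℕ => if m < n-2 then
          d m * (if (j:ℕ) = m then a else if (j:ℕ) = m+1 then b else 0) else 0) n]
      beta_reduce
      simp only [Bmat, Cmat, Matrix.of_apply, if_neg hlt, if_pos hi2]
      by_cases hj2 : (j:ℕ) < n-2
      · rw [if_pos hj2, if_neg (by omega)]
        have hps : ∑ m ∈ Finset.range n, (if m < n-2 then
              d m * (if (j:ℕ) = m then a else if (j:ℕ) = m+1 then b else 0) else 0)
            = ∑ m ∈ Finset.range n, ((if m = (j:ℕ) then d m * a else 0)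
              + (if (1 ≤ (j:ℕ) ∧ m = (j:ℕ)-1) then d m * b else 0)) := by
          refine Finset.sum_congr rfl (fun m _ => ?_)
          split_ifs <;> first | ring1 | omega | (exfalso; omega)
        rw [hps, Finset.sum_add_distrib, sum_single_ite n (j:ℕ) (by omega) (fun m => d m * a)]
        by_cases hj0 : (j:ℕ) = 0
        · have : ∑ m ∈ Finset.range n, (if (1 ≤ (j:ℕ) ∧ m = (j:ℕ)-1) then d m * b else 0) = 0 := by
            apply Finset.sum_eq_zero
            intro m _
            rw [if_neg (by omega)]
          rw [this]
          have h0 := hd 0 (by omega)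
          rw [if_pos rfl] at h0
          rw [hj0]
          linarith
        · have : ∑ m ∈ Finset.range n, (if (1 ≤ (j:ℕ) ∧ m = (j:ℕ)-1) then d m * b else 0)
              = ∑ m ∈ Finset.range n, (if m = (j:ℕ)-1 then d m * b else 0) := by
            refine Finset.sum_congr rfl (fun m _ => ?_)
            split_ifs <;> first | rfl | omega | (exfalso; omega)
          rw [this, sum_single_ite n ((j:ℕ)-1) (by omega) (fun m => d m * b)]
          have h0 := hd (j:ℕ) hj2
          rw [if_neg hj0] at h0
          linarith
      · by_cases hj3 : (j:ℕ) = n-2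
        · rw [if_neg (by omega), if_pos hj3, if_pos hj3]
          have : ∑ m ∈ Finset.range n, (if m < n-2 then
                d m * (if (j:ℕ) = m then a else if (j:ℕ) = m+1 then b else 0) else 0)
              = ∑ m ∈ Finset.range n, (if m = n-3 then d m * b else 0) := by
            refine Finset.sum_congr rfl (fun m _ => ?_)
            split_ifs <;> first | ring1 | omega | (exfalso; omega)
          rw [this, sum_single_ite n (n-3) (by omega) (fun m => d m * b)]
          ring
        · rw [if_neg (by omega), if_neg hj3, if_neg hj3]
          have : ∑ m ∈ Finset.range n, (if m < n-2 then
                d m * (if (j:ℕ) = m then a else if (j:ℕ) = m+1 then b else 0) else 0) = 0 := by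
            apply Finset.sum_eq_zero
            intro m _
            split_ifs <;> first | ring1 | omega | (exfalso; omega)
          rw [this]
          ring
    · -- row n-1
      have hg : ∀ k : Fin n,
          (if (i:ℕ) = n-2 ∧ (k:ℕ) < n-2 then d (k:ℕ)
           else if (i:ℕ) = n-1 ∧ (k:ℕ) < n-2 then v (k:ℕ) else 0) * Bmat n F a b k j
          = (fun m : ℕ => if m < n-2 then
              v m * (if (j:ℕ) = m then a else if (j:ℕ) = m+1 then b else 0) else 0) (k:ℕ) := by
        intro k
        by_cases hk : (k:ℕ) < n-2
        · rw [if_neg (by omega), if_pos ⟨by omega, hk⟩]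
          simp only [Bmat, Matrix.of_apply, if_pos (show (k:ℕ)+2 < n by omega)]
          rw [if_pos hk]
        · rw [if_neg (by omega), if_neg (by omega), zero_mul]
          show (0:ℝ) = if (k:ℕ) < n-2 then
            v (k:ℕ) * (if (j:ℕ) = (k:ℕ) then a else if (j:ℕ) = (k:ℕ)+1 then b else 0) else 0
          rw [if_neg hk]
      rw [Finset.sum_congr rfl (fun k _ => hg k),
        Fin.sum_univ_eq_sum_range (fun m : ℕ => if m < n-2 then
          v m * (if (j:ℕ) = m then a else if (j:ℕ) = m+1 then b else 0) else 0) n]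
      beta_reduce
      simp only [Bmat, Cmat, Matrix.of_apply, if_neg hlt, if_neg hi2]
      by_cases hj2 : (j:ℕ) < n-2
      · rw [if_pos (show (j:ℕ) < n-1 by omega), if_neg (by omega), if_neg (by omega)]
        have hps : ∑ m ∈ Finset.range n, (if m < n-2 then
              v m * (if (j:ℕ) = m then a else if (j:ℕ) = m+1 then b else 0) else 0)
            = ∑ m ∈ Finset.range n, ((if m = (j:ℕ) then v m * a else 0)
              + (if (1 ≤ (j:ℕ) ∧ m = (j:ℕ)-1) then v m * b else 0)) := by
          refine Finset.sum_congr rfl (fun m _ => ?_)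
          split_ifs <;> first | ring1 | omega | (exfalso; omega)
        rw [hps, Finset.sum_add_distrib, sum_single_ite n (j:ℕ) (by omega) (fun m => v m * a)]
        by_cases hj0 : (j:ℕ) = 0
        · have : ∑ m ∈ Finset.range n, (if (1 ≤ (j:ℕ) ∧ m = (j:ℕ)-1) then v m * b else 0) = 0 := by
            apply Finset.sum_eq_zero
            intro m _
            rw [if_neg (by omega)]
          rw [this]
          have h0 := hv 0 (by omega)
          rw [if_pos rfl] at h0
          rw [hj0]
          linarith
        · have : ∑ m ∈ Finset.range n, (if (1 ≤ (j:ℕ) ∧ m = (j:ℕ)-1) then v m * b else 0)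
              = ∑ m ∈ Finset.range n, (if m = (j:ℕ)-1 then v m * b else 0) := by
            refine Finset.sum_congr rfl (fun m _ => ?_)
            split_ifs <;> first | rfl | omega | (exfalso; omega)
          rw [this, sum_single_ite n ((j:ℕ)-1) (by omega) (fun m => v m * b)]
          have h0 := hv (j:ℕ) hj2
          rw [if_neg hj0] at h0
          linarith
      · by_cases hj3 : (j:ℕ) = n-2
        · rw [if_pos (show (j:ℕ) < n-1 by omega), if_pos hj3]
          have : ∑ m ∈ Finset.range n, (if m < n-2 then
                v m * (if (j:ℕ) = m then a else if (j:ℕ) = m+1 then b else 0) else 0)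
              = ∑ m ∈ Finset.range n, (if m = n-3 then v m * b else 0) := by
            refine Finset.sum_congr rfl (fun m _ => ?_)
            split_ifs <;> first | ring1 | omega | (exfalso; omega)
          rw [this, sum_single_ite n (n-3) (by omega) (fun m => v m * b)]
          rw [show (j:ℕ) = n-2 from hj3, show n-2+2 = n by omega]
          ring
        · have hj4 : (j:ℕ) = n-1 := by omega
          rw [if_neg (by omega), if_neg hj3, if_pos hj4]
          have : ∑ m ∈ Finset.range n, (if m < n-2 then
                v m * (if (j:ℕ) = m then a else if (j:ℕ) = m+1 then b else 0) else 0) = 0 := by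
            apply Finset.sum_eq_zero
            intro m _
            split_ifs <;> first | ring1 | omega | (exfalso; omega)
          rw [this]
          ring


lemma det_Cmat (n : ℕ) (hn : 3 < n) (a b u1 v1 : ℝ) :
    (Cmat n a b u1 v1).det = a^(n-2) * u1 := by
  have h : n - 2 + 2 = n := by omega
  have hdet : (Cmat n a b u1 v1).det
      = ((Cmat n a b u1 v1).submatrix (finCongr h) (finCongr h)).det :=
    (Matrix.det_submatrix_equiv_self (finCongr h) _).symm
  rw [hdet, det_aux]
  · have hprod : (∏ i : Fin (n-2),
        ((Cmat n a b u1 v1).submatrix (finCongr h) (finCongr h))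
          (Fin.castLE (by omega) i) (Fin.castLE (by omega) i)) = a^(n-2) := by
      have : ∀ i : Fin (n-2),
          ((Cmat n a b u1 v1).submatrix (finCongr h) (finCongr h))
            (Fin.castLE (by omega) i) (Fin.castLE (by omega) i) = a := by
        intro i
        simp only [Matrix.submatrix_apply, Cmat, Matrix.of_apply]
        have hval : ((finCongr h (Fin.castLE (by omega) i)) : ℕ) = (i:ℕ) := rfl
        rw [hval, if_pos (show (i:ℕ)+2 < n by omega), if_true]
      rw [Finset.prod_congr rfl (fun i _ => this i), Finset.prod_const,
        Finset.card_univ, Fintype.card_fin]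
    rw [hprod]
    have e11 : ((Cmat n a b u1 v1).submatrix (finCongr h) (finCongr h))
        ⟨n-2, by omega⟩ ⟨n-2, by omega⟩ = u1 := by
      simp only [Matrix.submatrix_apply, Cmat, Matrix.of_apply]
      have hval : ((finCongr h (⟨n-2, by omega⟩ : Fin (n-2+2))) : ℕ) = n-2 := rfl
      rw [hval, if_neg (by omega), if_pos (by omega), if_pos rfl]
    have e12 : ((Cmat n a b u1 v1).submatrix (finCongr h) (finCongr h))
        ⟨n-2, by omega⟩ ⟨n-2+1, by omega⟩ = 0 := by
      simp only [Matrix.submatrix_apply, Cmat, Matrix.of_apply]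
      have hval1 : ((finCongr h (⟨n-2, by omega⟩ : Fin (n-2+2))) : ℕ) = n-2 := rfl
      have hval2 : ((finCongr h (⟨n-2+1, by omega⟩ : Fin (n-2+2))) : ℕ) = n-2+1 := rfl
      rw [hval1, hval2, if_neg (by omega), if_pos (by omega), if_neg (by omega)]
    have e22 : ((Cmat n a b u1 v1).submatrix (finCongr h) (finCongr h))
        ⟨n-2+1, by omega⟩ ⟨n-2+1, by omega⟩ = 1 := by
      simp only [Matrix.submatrix_apply, Cmat, Matrix.of_apply]
      have hval : ((finCongr h (⟨n-2+1, by omega⟩ : Fin (n-2+2))) : ℕ) = n-2+1 := rfl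
      rw [hval, if_neg (by omega), if_neg (by omega), if_neg (by omega), if_pos (by omega)]
    rw [e11, e12, e22]
    ring
  · intro i j hji hjm
    simp only [Matrix.submatrix_apply, Cmat, Matrix.of_apply]
    have hvi : ((finCongr h i) : ℕ) = (i:ℕ) := rfl
    have hvj : ((finCongr h j) : ℕ) = (j:ℕ) := rfl
    rw [hvi, hvj]
    have hi2 := i.isLt
    by_cases hc : (i:ℕ)+2 < n
    · rw [if_pos hc, if_neg (by omega), if_neg (by omega)]
    · by_cases hc2 : (i:ℕ)+2 = n
      · rw [if_neg hc, if_pos hc2, if_neg (by omega)]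
      · rw [if_neg hc, if_neg hc2, if_neg (by omega), if_neg (by omega)]

/-- Shen–Cen–Hao: determinant of the circulant matrix of the first `n` Fibonacci numbers. -/
theorem det_circulant_fibonacci (n : ℕ) (hn : 3 < n) (F : ℕ → ℝ)
    (hF1 : F 1 = 1) (hF2 : F 2 = 1)
    (hrec : ∀ k, 3 ≤ k → F k = F (k - 1) + F (k - 2)) :
    Matrix.det (Matrix.of fun i j : Fin n => F (((j : ℕ) + n - (i : ℕ)) % n + 1)) =
      (1 - F (n + 1)) ^ (n - 1) +
        F n ^ (n - 2) *
          ∑ k ∈ Finset.Icc 1 (n - 1), F k * ((1 - F (n + 1)) / F n) ^ (k - 1) := by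
  have hpos : ∀ k, 1 ≤ k → (1:ℝ) ≤ F k := by
    intro k
    induction k using Nat.strong_induction_on with
    | _ k ih =>
      intro hk
      rcases Nat.lt_or_ge k 3 with h3 | h3
      · interval_cases k
        · rw [hF1]
        · rw [hF2]
      · rw [hrec k h3]
        have h1 := ih (k-1) (by omega) (by omega)
        have h2 := ih (k-2) (by omega) (by omega)
        linarith
  have hFn1 : F (n+1) = F n + F (n-1) := by
    have := hrec (n+1) (by omega)
    rwa [show n+1-1 = n by omega, show n+1-2 = n-1 by omega] at this
  have hFn : F n ≠ 0 := by have := hpos n (by omega); intro hc; linarith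
  have ha : (1 - F (n+1)) ≠ 0 := by
    have h1 := hpos n (by omega)
    have h2 := hpos (n-1) (by omega)
    rw [hFn1]; intro hc; linarith
  set a : ℝ := 1 - F (n+1) with ha_def
  set b : ℝ := -(F n) with hb_def
  set d : ℕ → ℝ := dSeq F a b with hd_def
  set v : ℕ → ℝ := dSeq (fun k => F (k+1)) a b with hv_def
  have hd : ∀ j, j < n-2 → F (j+1) + a * d j + (if j = 0 then 0 else b * d (j-1)) = 0 := by
    intro j _
    cases j with
    | zero =>
      rw [if_pos rfl, hd_def]
      show F 1 + a * (-(F 1)/a) + 0 = 0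
      field_simp
      try ring
    | succ m =>
      rw [if_neg (by omega), hd_def]
      show F (m+2) + a * (-(F (m+2) + b * dSeq F a b m)/a) + b * dSeq F a b m = 0
      field_simp
      try ring
  have hv : ∀ j, j < n-2 → F (j+2) + a * v j + (if j = 0 then 0 else b * v (j-1)) = 0 := by
    intro j _
    cases j with
    | zero =>
      rw [if_pos rfl, hv_def]
      show F 2 + a * (-(F 2)/a) + 0 = 0
      field_simp
      try ring
    | succ m =>
      rw [if_neg (by omega), hv_def]
      show F (m+3) + a * (-(F (m+2+1) + b * dSeq (fun k => F (k+1)) a b m)/a)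
        + b * dSeq (fun k => F (k+1)) a b m = 0
      field_simp
      try ring
  have h1 : Emat n * Mmat n F = Bmat n F a b := mul_EM n hn F hF1 hF2 hrec
  have h2 : E2mat n d v * Bmat n F a b
      = Cmat n a b ((1 - F n) + b * d (n-3)) (F n + b * v (n-3)) :=
    mul_E2B n hn F a b d v hd hv
  have hM : (Mmat n F).det = a^(n-2) * ((1 - F n) + b * d (n-3)) := by
    have e : (E2mat n d v * (Emat n * Mmat n F)).det = (Mmat n F).det := by
      rw [Matrix.det_mul, Matrix.det_mul, det_Emat, det_E2mat, one_mul, one_mul]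
    rw [← e, h1, h2, det_Cmat n hn]
  show (Mmat n F).det = _
  rw [hM]
  have hc := dSeq_closed F a b ha (n-3)
  rw [show n-3+1 = n-2 by omega, show -b = F n from by rw [hb_def]; ring, ← hd_def] at hc
  have hIcc : ∑ k ∈ Finset.Icc 1 (n-1), F k * (a / F n)^(k-1)
      = ∑ k ∈ Finset.range (n-1), F (1+k) * (a / F n)^k := by
    rw [show Finset.Icc 1 (n-1) = Finset.Ico 1 n from by
        rw [← Finset.Ico_add_one_right_eq_Icc]; congr 1; omega,
      Finset.sum_Ico_eq_sum_range]
    refine Finset.sum_congr rfl (fun k _ => ?_)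
    rw [show 1+k-1 = k by omega]
  rw [hIcc, show n-1 = (n-2)+1 by omega, Finset.sum_range_succ]
  have hterm : ∀ k ∈ Finset.range (n-2), F n^(n-2) * (F (1+k) * (a/F n)^k)
      = F n * (F (k+1) * (F n)^(n-3-k) * a^k) := by
    intro k hk
    simp only [Finset.mem_range] at hk
    rw [div_pow, show F n ^ (n-2) = F n ^ k * (F n * F n^(n-3-k)) from by
      rw [← pow_succ', ← pow_add]; congr 1; omega,
      show (1:ℕ)+k = k+1 by omega]
    field_simp
    try ring
  have hmulsum : F n^(n-2) * (∑ k ∈ Finset.range (n-2), F (1+k) * (a/F n)^k)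
      = F n * (∑ k ∈ Finset.range (n-2), F (k+1) * (F n)^(n-3-k) * a^k) := by
    rw [Finset.mul_sum, Finset.mul_sum]
    exact Finset.sum_congr rfl hterm
  have htop : F n^(n-2) * (F (1+(n-2)) * (a/F n)^(n-2)) = F (n-1) * a^(n-2) := by
    rw [div_pow, show (1:ℕ)+(n-2) = n-1 by omega]
    field_simp
    try ring
  linear_combination b * hc + (-(∑ k ∈ Finset.range (n-2), F (k+1) * (F n)^(n-3-k) * a^k)) * hb_def
    + (-(a^(n-2))) * ha_def + a^(n-2) * hFn1 - hmulsum - htop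
end

section
/- Let p, q, a, b be real numbers and {Uₖ} be defined by U₁ = a, U₂ = b, Uₖ = p·U_{k-1} + q·U_{k-2} for k ≥ 3. For n > 3, the determinant of U = circ(U₁, U₂, …, Uₙ) equals (a² - b·Uₙ)(a - U_{n+1})^{n-2} + Σ_{k=2}^{n-1} (a·U_{k+1} - b·Uₖ)(a - U_{n+1})^{k-2}(q·Uₙ - b + p·a)^{n-k}. -/
private def Tmat (x y : ℝ) (m : ℕ) (c : ℕ → ℝ) : Matrix (Fin (m+1)) (Fin (m+1)) ℝ :=
  Matrix.of fun i j =>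
    if (i:ℕ) < m then (if (j:ℕ) = (i:ℕ) then x else if (j:ℕ) = (i:ℕ)+1 then -y else 0)
    else c (j:ℕ)

private lemma detT (x y : ℝ) : ∀ (m : ℕ) (c : ℕ → ℝ),
    (Tmat x y m c).det = ∑ j ∈ Finset.range (m+1), c j * x^j * y^(m-j) := by
  intro m
  induction m with
  | zero =>
    intro c
    rw [Matrix.det_fin_one]
    simp [Tmat]
  | succ m ih =>
    intro c
    rw [Matrix.det_succ_column_zero, Fin.sum_univ_succ]
    have hsub1 : (Tmat x y (m+1) c).submatrix Fin.succ Fin.succ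
        = Tmat x y m (fun j => c (j+1)) := by
      ext i j
      simp only [Tmat, Matrix.submatrix_apply, Matrix.of_apply, Fin.val_succ]
      split_ifs <;> first | rfl | omega
    have h0 : (Tmat x y (m+1) c) 0 0 = x := by
      simp [Tmat]
    have hrest : ∑ i : Fin (m+1),
        (-1:ℝ) ^ ((i.succ : Fin (m+2)) : ℕ) * (Tmat x y (m+1) c) i.succ 0 *
          ((Tmat x y (m+1) c).submatrix i.succ.succAbove Fin.succ).det
        = c 0 * y^(m+1) := by
      rw [Finset.sum_eq_single (Fin.last m)]
      · have hlast : (Fin.last m).succ = Fin.last (m+1) := rfl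
        rw [hlast]
        have hentry : (Tmat x y (m+1) c) (Fin.last (m+1)) 0 = c 0 := by
          simp [Tmat]
        have hsub2 : ((Tmat x y (m+1) c).submatrix (Fin.last (m+1)).succAbove Fin.succ).det
            = (-y)^(m+1) := by
          rw [Fin.succAbove_last]
          rw [Matrix.det_of_lowerTriangular]
          · have : ∀ i : Fin (m+1),
                (Tmat x y (m+1) c).submatrix Fin.castSucc Fin.succ i i = -y := by
              intro i
              simp only [Tmat, Matrix.submatrix_apply, Matrix.of_apply, Fin.coe_castSucc,
                Fin.val_succ]
              rw [if_pos i.isLt]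
              rw [if_neg (by omega)]
              simp
            rw [Finset.prod_congr rfl (fun i _ => this i)]
            simp
          · intro i j hij
            simp only [Tmat, Matrix.submatrix_apply, Matrix.of_apply, Fin.coe_castSucc,
              Fin.val_succ]
            have hij' : (i:ℕ) < (j:ℕ) := hij
            rw [if_pos i.isLt, if_neg (by omega), if_neg (by omega)]
        rw [hentry, hsub2]
        have : ((Fin.last (m+1) : Fin (m+2)) : ℕ) = m+1 := rfl
        rw [this]
        rw [show ((-1:ℝ))^(m+1) * c 0 * (-y)^(m+1) = c 0 * ((-1)*(-y))^(m+1) by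
          rw [mul_pow]; ring]
        ring_nf
      · intro i _ hi
        have hentry : (Tmat x y (m+1) c) i.succ 0 = 0 := by
          have h1 : ((i.succ : Fin (m+2)) : ℕ) = (i:ℕ)+1 := rfl
          have h3 := i.isLt
          have h2 : (i:ℕ) < m := by
            by_contra h
            exact hi (Fin.ext (by simp only [Fin.val_last]; omega))
          simp only [Tmat, Matrix.of_apply, h1, Fin.val_zero]
          rw [if_pos (by omega), if_neg (by omega), if_neg (by omega)]
        rw [hentry]; ring
      · intro h; exact absurd (Finset.mem_univ _) h
    rw [hrest, Fin.succAbove_zero, hsub1, h0, ih]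
    conv_rhs => rw [Finset.sum_range_succ']
    simp only [Nat.succ_sub_succ_eq_sub, Nat.sub_zero, pow_zero, mul_one, Fin.val_zero,
      Fin.isValue, one_mul]
    congr 1
    rw [Finset.mul_sum]
    exact Finset.sum_congr rfl fun j _ => by ring

private lemma coe_succAbove' {t : ℕ} (c : Fin (t+1)) (k : Fin t) :
    ((c.succAbove k : Fin (t+1)) : ℕ) = if (k:ℕ) < (c:ℕ) then (k:ℕ) else (k:ℕ)+1 := by
  simp only [Fin.succAbove, Fin.lt_def, Fin.coe_castSucc]
  split_ifs <;> simp

/-- Bozkurt's formula for the determinant of the circulant matrix of a sequence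
satisfying a second-order linear recurrence `Uₖ = p U_{k-1} + q U_{k-2}`,
`U₁ = a`, `U₂ = b`. -/
theorem det_circulant_second_order (n : ℕ) (hn : 3 < n) (p q a b : ℝ) (U : ℕ → ℝ)
    (hU1 : U 1 = a) (hU2 : U 2 = b)
    (hrec : ∀ k, 3 ≤ k → U k = p * U (k - 1) + q * U (k - 2)) :
    Matrix.det (Matrix.of fun i j : Fin n => U (((j : ℕ) + n - (i : ℕ)) % n + 1)) =
      (a ^ 2 - b * U n) * (a - U (n + 1)) ^ (n - 2) +
        ∑ k ∈ Finset.Icc 2 (n - 1),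
          (a * U (k + 1) - b * U k) * (a - U (n + 1)) ^ (k - 2) *
            (q * U n - b + p * a) ^ (n - k) := by
  obtain ⟨m, rfl⟩ : ∃ m, n = m + 2 := ⟨n - 2, by omega⟩
  have hm : 2 ≤ m := by omega
  set x : ℝ := a - U (m + 2 + 1) with hxdef
  set y : ℝ := q * U (m + 2) - b + p * a with hydef
  set A : Matrix (Fin (m+2)) (Fin (m+2)) ℝ :=
    Matrix.of fun i j : Fin (m+2) => U (((j : ℕ) + (m+2) - (i : ℕ)) % (m+2) + 1) with hAdef
  set E : Matrix (Fin (m+2)) (Fin (m+2)) ℝ :=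
    Matrix.of fun i j : Fin (m+2) =>
      (if j = i then (1:ℝ) else 0) + (if (i:ℕ) < m ∧ (j:ℕ) = (i:ℕ)+1 then -p else 0)
        + (if (i:ℕ) < m ∧ (j:ℕ) = (i:ℕ)+2 then -q else 0) with hEdef
  set B : Matrix (Fin (m+2)) (Fin (m+2)) ℝ :=
    Matrix.of fun i j : Fin (m+2) =>
      if (i:ℕ) < m then (if (j:ℕ) = (i:ℕ) then x else if (j:ℕ) = (i:ℕ)+1 then -y else 0)
      else U (((j : ℕ) + (m+2) - (i : ℕ)) % (m+2) + 1) with hBdef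
  -- mod helper
  have hmod : ∀ s t : ℕ, t < m+2 → s < m+2 →
      (s + (m+2) - t) % (m+2) = if t ≤ s then s - t else s + (m+2) - t := by
    intro s t ht hs
    by_cases h : t ≤ s
    · rw [if_pos h, show s + (m+2) - t = (s - t) + (m+2) from by omega,
        Nat.add_mod_right, Nat.mod_eq_of_lt (by omega)]
    · rw [if_neg h, Nat.mod_eq_of_lt (by omega)]
  have hzero : ∀ t, 3 ≤ t → U t - p * U (t-1) - q * U (t-2) = 0 := by
    intro t ht; rw [hrec t ht]; ring
  have h3 : U (m+3) = p * U (m+2) + q * U (m+1) := hrec (m+3) (by omega)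
  -- entry computation for the row-reduced rows
  have hval : ∀ ii jj : ℕ, ii < m → jj < m+2 →
      U ((jj + (m+2) - ii) % (m+2) + 1) + (-p) * U ((jj + (m+2) - (ii+1)) % (m+2) + 1)
        + (-q) * U ((jj + (m+2) - (ii+2)) % (m+2) + 1)
      = if jj = ii then x else if jj = ii+1 then -y else 0 := by
    intro ii jj hii hjj
    rw [hmod jj ii (by omega) hjj, hmod jj (ii+1) (by omega) hjj,
      hmod jj (ii+2) (by omega) hjj]
    rcases Nat.lt_trichotomy jj ii with hlt | heq | hgt
    · rw [if_neg (by omega), if_neg (by omega), if_neg (by omega),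
        if_neg (by omega), if_neg (by omega)]
      rw [show jj + (m+2) - (ii+1) + 1 = (jj + (m+2) - ii + 1) - 1 from by omega,
        show jj + (m+2) - (ii+2) + 1 = (jj + (m+2) - ii + 1) - 2 from by omega]
      have := hzero (jj + (m+2) - ii + 1) (by omega)
      linarith
    · subst heq
      rw [if_pos (le_refl jj), if_neg (by omega), if_neg (by omega),
        if_pos rfl]
      rw [show jj - jj = 0 from by omega,
        show jj + (m+2) - (jj+1) + 1 = m + 2 from by omega,
        show jj + (m+2) - (jj+2) + 1 = m + 1 from by omega]
      rw [hxdef, hU1]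
      rw [show m + 2 + 1 = m + 3 from rfl, h3]
      ring
    · by_cases h1 : jj = ii + 1
      · subst h1
        rw [if_pos (by omega), if_pos (by omega), if_neg (by omega),
          if_neg (by omega), if_pos rfl]
        rw [show ii + 1 - ii = 1 from by omega, show ii + 1 - (ii+1) = 0 from by omega,
          show ii + 1 + (m+2) - (ii+2) + 1 = m + 2 from by omega]
        rw [hydef, hU1, hU2]
        ring
      · rw [if_pos (by omega), if_pos (by omega), if_pos (by omega),
          if_neg (by omega), if_neg h1]
        rw [show jj - (ii+1) + 1 = (jj - ii + 1) - 1 from by omega,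
          show jj - (ii+2) + 1 = (jj - ii + 1) - 2 from by omega]
        have := hzero (jj - ii + 1) (by omega)
        linarith
  -- E * A = B
  have hEA : E * A = B := by
    ext i j
    rw [Matrix.mul_apply]
    have expand : ∀ k : Fin (m+2), E i k * A k j =
        (if k = i then A k j else 0)
          + ((if (i:ℕ) < m ∧ (k:ℕ) = (i:ℕ)+1 then (-p) * A k j else 0)
          + (if (i:ℕ) < m ∧ (k:ℕ) = (i:ℕ)+2 then (-q) * A k j else 0)) := by
      intro k
      rw [hEdef]
      simp only [Matrix.of_apply]
      split_ifs <;> ring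
    rw [Finset.sum_congr rfl (fun k _ => expand k), Finset.sum_add_distrib,
      Finset.sum_add_distrib, Finset.sum_ite_eq' Finset.univ i (fun k => A k j)]
    simp only [Finset.mem_univ, if_true]
    by_cases hi : (i:ℕ) < m
    · have e2 : ∑ k : Fin (m+2), (if (i:ℕ) < m ∧ (k:ℕ) = (i:ℕ)+1 then (-p) * A k j else 0)
          = (-p) * A ⟨(i:ℕ)+1, by omega⟩ j := by
        rw [Finset.sum_eq_single (⟨(i:ℕ)+1, by omega⟩ : Fin (m+2))]
        · rw [if_pos ⟨hi, rfl⟩]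
        · intro k _ hk; rw [if_neg]; rintro ⟨-, h2⟩; exact hk (Fin.ext h2)
        · intro h; exact absurd (Finset.mem_univ _) h
      have e3 : ∑ k : Fin (m+2), (if (i:ℕ) < m ∧ (k:ℕ) = (i:ℕ)+2 then (-q) * A k j else 0)
          = (-q) * A ⟨(i:ℕ)+2, by omega⟩ j := by
        rw [Finset.sum_eq_single (⟨(i:ℕ)+2, by omega⟩ : Fin (m+2))]
        · rw [if_pos ⟨hi, rfl⟩]
        · intro k _ hk; rw [if_neg]; rintro ⟨-, h2⟩; exact hk (Fin.ext h2)
        · intro h; exact absurd (Finset.mem_univ _) h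
      rw [e2, e3, hAdef, hBdef]
      simp only [Matrix.of_apply]
      rw [if_pos hi]
      have := hval (i:ℕ) (j:ℕ) hi j.isLt
      linarith
    · have e2 : ∑ k : Fin (m+2), (if (i:ℕ) < m ∧ (k:ℕ) = (i:ℕ)+1 then (-p) * A k j else 0)
          = 0 := by
        apply Finset.sum_eq_zero; intro k _
        rw [if_neg]; rintro ⟨h1, -⟩; exact hi h1
      have e3 : ∑ k : Fin (m+2), (if (i:ℕ) < m ∧ (k:ℕ) = (i:ℕ)+2 then (-q) * A k j else 0)
          = 0 := by
        apply Finset.sum_eq_zero; intro k _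
        rw [if_neg]; rintro ⟨h1, -⟩; exact hi h1
      rw [e2, e3, hAdef, hBdef]
      simp only [Matrix.of_apply]
      rw [if_neg hi]
      ring
  -- det E = 1
  have hdetE : E.det = 1 := by
    have htri : E.BlockTriangular id := by
      intro i j hij
      have hij' : (j:ℕ) < (i:ℕ) := hij
      rw [hEdef]
      simp only [Matrix.of_apply]
      rw [if_neg (by intro h; rw [h] at hij'; omega),
        if_neg (by rintro ⟨-, h2⟩; omega), if_neg (by rintro ⟨-, h2⟩; omega)]
      ring
    rw [Matrix.det_of_upperTriangular htri]
    have : ∀ i : Fin (m+2), E i i = 1 := by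
      intro i
      rw [hEdef]
      simp only [Matrix.of_apply]
      rw [if_neg (show ¬((i:ℕ) < m ∧ (i:ℕ) = (i:ℕ)+1) from by omega),
        if_neg (show ¬((i:ℕ) < m ∧ (i:ℕ) = (i:ℕ)+2) from by omega)]
      simp
    rw [Finset.prod_congr rfl (fun i _ => this i)]
    simp
  -- determinant of B
  have hM1 : B.submatrix ((Fin.last m).castSucc.succAbove) ((Fin.last (m+1)).succAbove)
      = Tmat x y m (fun j => U ((j+1) % (m+2) + 1)) := by
    rw [Fin.succAbove_last]
    ext i j
    simp only [Tmat, Matrix.submatrix_apply, Matrix.of_apply, Fin.coe_castSucc, hBdef]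
    by_cases hi : (i:ℕ) < m
    · have hrow : (((Fin.last m).castSucc.succAbove i : Fin (m+2)) : ℕ) = (i:ℕ) := by
        rw [coe_succAbove']
        simp [hi]
      rw [hrow, if_pos hi, if_pos hi]
    · have him : (i:ℕ) = m := by have := i.isLt; omega
      have hrow : (((Fin.last m).castSucc.succAbove i : Fin (m+2)) : ℕ) = m+1 := by
        rw [coe_succAbove']
        simp [him]
      rw [hrow, if_neg (by omega), if_neg hi,
        show (j:ℕ) + (m+2) - (m+1) = (j:ℕ)+1 from by omega]
  have hM2 : B.submatrix ((Fin.last (m+1)).succAbove) ((Fin.last (m+1)).succAbove)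
      = Tmat x y m (fun j => U ((j+2) % (m+2) + 1)) := by
    rw [Fin.succAbove_last]
    ext i j
    simp only [Tmat, Matrix.submatrix_apply, Matrix.of_apply, Fin.coe_castSucc, hBdef]
    by_cases hi : (i:ℕ) < m
    · rw [if_pos hi, if_pos hi]
    · have him : (i:ℕ) = m := by have := i.isLt; omega
      rw [if_neg hi, if_neg hi, him,
        show (j:ℕ) + (m+2) - m = (j:ℕ)+2 from by omega]
  have hb : B ((Fin.last m).castSucc) (Fin.last (m+1)) = b := by
    rw [hBdef]
    simp only [Matrix.of_apply, Fin.coe_castSucc, Fin.val_last]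
    rw [if_neg (by omega), show m+1 + (m+2) - m = 1 + (m+2) from by omega,
      Nat.add_mod_right, Nat.mod_eq_of_lt (by omega)]
    exact hU2
  have ha : B (Fin.last (m+1)) (Fin.last (m+1)) = a := by
    rw [hBdef]
    simp only [Matrix.of_apply, Fin.val_last]
    rw [if_neg (by omega), show m+1 + (m+2) - (m+1) = m+2 from by omega, Nat.mod_self]
    exact hU1
  have hdetB : B.det =
      a * (∑ j ∈ Finset.range (m+1), U ((j+2) % (m+2) + 1) * x^j * y^(m-j))
        - b * (∑ j ∈ Finset.range (m+1), U ((j+1) % (m+2) + 1) * x^j * y^(m-j)) := by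
    rw [Matrix.det_succ_column B (Fin.last (m+1)), Fin.sum_univ_castSucc,
      Fin.sum_univ_castSucc]
    have hz : ∑ i : Fin m,
        (-1:ℝ)^(((i.castSucc.castSucc : Fin (m+2)):ℕ) + ((Fin.last (m+1)):ℕ))
          * B i.castSucc.castSucc (Fin.last (m+1))
          * (B.submatrix (i.castSucc.castSucc).succAbove (Fin.last (m+1)).succAbove).det
        = 0 := by
      apply Finset.sum_eq_zero
      intro i _
      have hi := i.isLt
      have hentry : B i.castSucc.castSucc (Fin.last (m+1)) = 0 := by
        rw [hBdef]
        simp only [Matrix.of_apply, Fin.coe_castSucc, Fin.val_last]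
        rw [if_pos (by omega), if_neg (by omega), if_neg (by omega)]
      rw [hentry]
      ring
    rw [hz, hb, ha, hM1, hM2, detT, detT]
    have hs1 : (((Fin.last m).castSucc : Fin (m+2)) : ℕ) = m := rfl
    have hs2 : ((Fin.last (m+1) : Fin (m+2)) : ℕ) = m+1 := rfl
    rw [hs1, hs2]
    rw [show ((-1:ℝ))^(m + (m+1)) = -1 from Odd.neg_one_pow ⟨m, by ring⟩,
      show ((-1:ℝ))^((m+1) + (m+1)) = 1 from Even.neg_one_pow ⟨m+1, by ring⟩]
    ring
  -- assemble
  have hABdet : A.det = B.det := by rw [← hEA, Matrix.det_mul, hdetE, one_mul]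
  rw [hABdet, hdetB]
  rw [show m+2-2 = m from rfl, show m+2-1 = m+1 from rfl]
  rw [Finset.mul_sum, Finset.mul_sum, ← Finset.sum_sub_distrib, Finset.sum_range_succ]
  rw [← Finset.Ico_add_one_right_eq_Icc, Finset.sum_Ico_eq_sum_range,
    show m+1+1-2 = m from by omega]
  rw [add_comm ((a^2 - b * U (m+2)) * x^m)]
  congr 1
  · apply Finset.sum_congr rfl
    intro j hj
    have hj' : j < m := Finset.mem_range.mp hj
    rw [show (j+2) % (m+2) = j+2 from Nat.mod_eq_of_lt (by omega),
      show (j+1) % (m+2) = j+1 from Nat.mod_eq_of_lt (by omega),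
      show 2+j = j+2 from Nat.add_comm 2 j,
      show j+2-2 = j from by omega,
      show m+2-(j+2) = m-j from by omega,
      show j+1+1 = j+2 from rfl, show j+2+1 = j+3 from rfl]
    ring
  · rw [Nat.mod_self, show (m+1) % (m+2) = m+1 from Nat.mod_eq_of_lt (by omega),
      show m+1+1 = m+2 from rfl, hU1, Nat.sub_self, pow_zero]
    ring
end

section
/- Let Jₖ denote the Jacobsthal numbers with J₁ = J₂ = 1 and Jₖ = J_{k-1} + 2J_{k-2} for k ≥ 3, and let n > 3. Then det(circ(J₁, J₂, …, Jₙ)) = (1 - Jₙ)(1 - J_{n+1})^{n-2} + Σ_{k=2}^{n-1} (J_{k+1} - Jₖ)(1 - J_{n+1})^{k-2}(2Jₙ)^{n-k}. -/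
/-!
Right-multiplying the circulant matrix of a sequence with `c (d + 2) = p c (d + 1) + q c d` by a
unipotent upper triangular matrix replaces every column `j ≥ 2` by
`col j - p col (j - 1) - q col (j - 2)`. By the recurrence only the wrapped-around entries survive
there: `x` on the diagonal and `-y` on the superdiagonal. Expanding the resulting matrix along its
first row, and the bidiagonal minors again along their first rows, gives one term
`y ^ k x ^ (n - 2 - k)` for each row `k + 1`; for the Jacobsthal numbers `p = 1`, `q = 2`,
`x = 1 - J (n + 1)` and `y = 2 J n`.
-/

open Finset

namespace Matrix

variable {R : Type*} [CommRing R]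

theorem det_succ_row_zero_of_eq_zero {m : ℕ} (M : Matrix (Fin (m + 2)) (Fin (m + 2)) R)
    (h : ∀ j : Fin m, M 0 j.succ.succ = 0) :
    M.det = M 0 0 * (M.submatrix Fin.succ Fin.succ).det -
      M 0 1 * (M.submatrix Fin.succ (Fin.succAbove 1)).det := by
  simp [det_succ_row_zero M, Fin.sum_univ_succ, h, sub_eq_add_neg]

theorem det_of_upperBidiagonal_off_col_zero {m : ℕ} (x y : R)
    (M : Matrix (Fin (m + 1)) (Fin (m + 1)) R)
    (hM : ∀ i j : Fin (m + 1), j ≠ 0 →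
      M i j = if (i : ℕ) = j then x else if (i : ℕ) + 1 = j then -y else 0) :
    M.det = ∑ k : Fin (m + 1), y ^ (k : ℕ) * x ^ (m - k) * M k 0 := by
  induction m with
  | zero => simp
  | succ m ih =>
    have hdiag : (M.submatrix Fin.succ Fin.succ).det = x ^ (m + 1) := by
      rw [det_of_isUpperTriangular]
      · simp [hM]
      · intro i j hji
        have : (j : ℕ) < i := hji
        rw [submatrix_apply, hM _ _ (Fin.succ_ne_zero j), if_neg (by simp; omega),
          if_neg (by simp; omega)]
    have hminor := ih (M.submatrix Fin.succ (Fin.succAbove 1)) fun i j hj => by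
      obtain ⟨j, rfl⟩ := Fin.exists_succ_eq.mpr hj
      simp [Fin.one_succAbove_succ, hM]
    have hM01 : M 0 1 = -y := by simp [hM 0 1 Fin.zero_lt_one.ne']
    rw [det_succ_row_zero_of_eq_zero M fun j => by simp [hM], hdiag, hminor, hM01,
      Fin.sum_univ_succ (n := m + 1)]
    simp only [Fin.val_zero, Fin.val_succ, pow_zero, one_mul, Nat.sub_zero, pow_succ,
      Nat.add_sub_add_right, submatrix_apply, Fin.one_succAbove_zero, neg_mul, mul_sum,
      sum_neg_distrib, sub_neg_eq_add]
    exact congrArg₂ (· + ·) (by ring) (sum_congr rfl fun k _ => by ring)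

theorem det_of_upperBidiagonal_off_cols_zero_one {m : ℕ} (x y : R)
    (M : Matrix (Fin (m + 2)) (Fin (m + 2)) R)
    (hM : ∀ i j : Fin (m + 2), 2 ≤ (j : ℕ) →
      M i j = if (i : ℕ) = j then x else if (i : ℕ) + 1 = j then -y else 0) :
    M.det = ∑ k : Fin (m + 1),
      y ^ (k : ℕ) * x ^ (m - k) * (M 0 0 * M k.succ 1 - M 0 1 * M k.succ 0) := by
  have hshape : ∀ (f : Fin (m + 1) → Fin (m + 2)), (∀ j : Fin m, f j.succ = j.succ.succ) →
      ∀ i j : Fin (m + 1), j ≠ 0 → M.submatrix Fin.succ f i j =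
        if (i : ℕ) = j then x else if (i : ℕ) + 1 = j then -y else 0 := by
    intro f hf i j hj
    obtain ⟨j, rfl⟩ := Fin.exists_succ_eq.mpr hj
    simp [hf, hM]
  rw [det_succ_row_zero_of_eq_zero M fun j => by simp [hM],
    det_of_upperBidiagonal_off_col_zero x y _ (hshape _ fun _ => rfl),
    det_of_upperBidiagonal_off_col_zero x y _ (hshape _ Fin.one_succAbove_succ)]
  simp only [mul_sum, ← sum_sub_distrib, submatrix_apply, Fin.succ_zero_eq_one,
    Fin.one_succAbove_zero]
  exact sum_congr rfl fun k _ => by ring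

def recurrenceColOp (n : ℕ) (p q : R) : Matrix (Fin n) (Fin n) R :=
  of fun k j => if (k : ℕ) = j then 1 else if 2 ≤ (j : ℕ) ∧ (k : ℕ) + 1 = j then -p
    else if (k : ℕ) + 2 = j then -q else 0

theorem det_recurrenceColOp (n : ℕ) (p q : R) : (recurrenceColOp n p q).det = 1 := by
  rw [det_of_isUpperTriangular]
  · simp [recurrenceColOp]
  · intro k j hjk
    have : (j : ℕ) < k := hjk
    simp only [recurrenceColOp, of_apply]
    rw [if_neg (by omega), if_neg (by omega), if_neg (by omega)]

theorem mul_recurrenceColOp_apply_of_lt_two {n : ℕ} (p q : R) (A : Matrix (Fin n) (Fin n) R)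
    (i : Fin n) {j : Fin n} (hj : (j : ℕ) < 2) : (A * recurrenceColOp n p q) i j = A i j := by
  have hE : ∀ k, recurrenceColOp n p q k j = if k = j then 1 else 0 := fun k => by
    simp only [recurrenceColOp, of_apply, Fin.ext_iff]
    split_ifs <;> first | rfl | omega
  simp [mul_apply, hE]

theorem mul_recurrenceColOp_apply_of_two_le {n : ℕ} (p q : R) (A : Matrix (Fin n) (Fin n) R)
    (i : Fin n) {j : Fin n} (hj : 2 ≤ (j : ℕ)) : (A * recurrenceColOp n p q) i j =
      A i j - p * A i ⟨j - 1, by omega⟩ - q * A i ⟨j - 2, by omega⟩ := by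
  have hE : ∀ k, recurrenceColOp n p q k j = (if k = j then 1 else 0) -
      (if k = ⟨j - 1, by omega⟩ then p else 0) - (if k = ⟨j - 2, by omega⟩ then q else 0) :=
    fun k => by
      simp only [recurrenceColOp, of_apply, Fin.ext_iff]
      split_ifs <;> first | omega | ring
  simp [mul_apply, hE, mul_sub, sum_sub_distrib, mul_comm]

theorem circulant_recurrence_combination {n : ℕ} (c : ℕ → R) (p q x y : R)
    (hc : ∀ d, d + 2 < n → c (d + 2) = p * c (d + 1) + q * c d)
    (hx : x = c 0 - p * c (n - 1) - q * c (n - 2)) (hy : y = p * c 0 + q * c (n - 1) - c 1)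
    {i j : ℕ} (hi : i < n) (hj : 2 ≤ j) (hjn : j < n) :
    c ((j + n - i) % n) - p * c ((j - 1 + n - i) % n) - q * c ((j - 2 + n - i) % n) =
      if i = j then x else if i + 1 = j then -y else 0 := by
  obtain rfl | hij := eq_or_ne i j
  · rw [if_pos rfl, hx, show i + n - i = n by omega, Nat.mod_self,
      show i - 1 + n - i = n - 1 by omega, show i - 2 + n - i = n - 2 by omega,
      Nat.mod_eq_of_lt (by omega), Nat.mod_eq_of_lt (by omega)]
  obtain rfl | hij1 := eq_or_ne (i + 1) j
  · rw [if_neg hij, if_pos rfl, hy, show i + 1 + n - i = 1 + n by omega, Nat.add_mod_right,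
      Nat.mod_eq_of_lt (by omega), show i + 1 - 1 + n - i = n by omega, Nat.mod_self,
      show i + 1 - 2 + n - i = n - 1 by omega, Nat.mod_eq_of_lt (by omega)]
    ring
  rw [if_neg hij, if_neg hij1, sub_sub, sub_eq_zero]
  obtain ⟨d, hd, h2, h1, h0⟩ : ∃ d, d + 2 < n ∧ (j + n - i) % n = d + 2 ∧
      (j - 1 + n - i) % n = d + 1 ∧ (j - 2 + n - i) % n = d := by
    rcases Nat.lt_or_gt_of_ne hij with h | h
    · have hmod : ∀ a, a < n → (a + n) % n = a := fun a ha => by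
        rw [Nat.add_mod_right, Nat.mod_eq_of_lt ha]
      refine ⟨j - i - 2, by omega, ?_, ?_, ?_⟩
      · rw [show j + n - i = j - i - 2 + 2 + n by omega, hmod _ (by omega)]
      · rw [show j - 1 + n - i = j - i - 2 + 1 + n by omega, hmod _ (by omega)]
      · rw [show j - 2 + n - i = j - i - 2 + n by omega, hmod _ (by omega)]
    · refine ⟨j + n - i - 2, by omega, ?_, ?_, ?_⟩ <;>
        rw [Nat.mod_eq_of_lt (by omega)] <;> omega
  rw [h2, h1, h0, hc d hd]

theorem det_circulant_of_linearRecurrence {n : ℕ} (hn : 2 ≤ n) (c : ℕ → R) (p q x y : R)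
    (hc : ∀ d, d + 2 < n → c (d + 2) = p * c (d + 1) + q * c d)
    (hx : x = c 0 - p * c (n - 1) - q * c (n - 2)) (hy : y = p * c 0 + q * c (n - 1) - c 1) :
    (of fun i j : Fin n => c ((j + n - i) % n)).det =
      (c 0 * c 0 - c 1 * c (n - 1)) * x ^ (n - 2) +
        ∑ k ∈ Icc 2 (n - 1), (c 0 * c k - c 1 * c (k - 1)) * x ^ (k - 2) * y ^ (n - k) := by
  obtain ⟨m, rfl⟩ : ∃ m, n = m + 2 := ⟨n - 2, by omega⟩
  set C : Matrix (Fin (m + 2)) (Fin (m + 2)) R := of fun i j => c ((j + (m + 2) - i) % (m + 2))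
  have hCE : C.det = (C * recurrenceColOp (m + 2) p q).det := by
    rw [det_mul, det_recurrenceColOp, mul_one]
  rw [hCE, det_of_upperBidiagonal_off_cols_zero_one x y _ fun i j hj => by
    rw [mul_recurrenceColOp_apply_of_two_le p q C i hj]
    exact circulant_recurrence_combination c p q x y hc hx hy i.isLt hj j.isLt]
  have hCol0 : ∀ i, (C * recurrenceColOp (m + 2) p q) i 0 = C i 0 :=
    fun i => mul_recurrenceColOp_apply_of_lt_two p q C i (by simp)
  have hCol1 : ∀ i, (C * recurrenceColOp (m + 2) p q) i 1 = C i 1 :=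
    fun i => mul_recurrenceColOp_apply_of_lt_two p q C i (by simp)
  have hC_lt : ∀ i j : Fin (m + 2), (j : ℕ) < i → C i j = c (j + (m + 2) - i) :=
    fun i j h => by simp only [C, of_apply]; rw [Nat.mod_eq_of_lt (by omega)]
  have hC00 : C 0 0 = c 0 := by simp [C]
  have hC01 : C 0 1 = c 1 := by simp [C]
  have hC11 : C 1 1 = c 0 := by simp [C]
  simp only [hCol0, hCol1, hC00, hC01]
  rw [Fin.sum_univ_succ, Fin.succ_zero_eq_one, hC11, hC_lt 1 0 (by simp)]
  congr 1
  · simp [show m + 2 - 2 = m by omega, mul_comm]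
  · refine sum_bij (fun k _ => m + 1 - k) (fun k _ => by simp; omega)
      (fun a _ b _ h => Fin.ext (by omega)) (fun l hl => ?_) (fun k _ => ?_)
    · simp only [mem_Icc] at hl
      exact ⟨⟨m + 1 - l, by omega⟩, mem_univ _, by simp; omega⟩
    · rw [hC_lt _ _ (by simp), hC_lt _ _ (by simp)]
      simp only [Fin.val_succ, Fin.val_zero, Fin.val_one]
      rw [show 1 + (m + 2) - (k + 1 + 1) = m + 1 - k by omega,
        show 0 + (m + 2) - (k + 1 + 1) = m - k by omega, show m - (k + 1) = m + 1 - k - 2 by omega,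
        show m + 1 - k - 1 = m - k by omega, show m + 2 - (m + 1 - k) = k + 1 by omega]
      ring

end Matrix

/-- Bozkurt–Tam: determinant of the circulant matrix of the first `n` Jacobsthal numbers. -/
theorem det_circulant_jacobsthal (n : ℕ) (hn : 3 < n) (J : ℕ → ℝ)
    (hJ1 : J 1 = 1) (hJ2 : J 2 = 1)
    (hrec : ∀ k, 3 ≤ k → J k = J (k - 1) + 2 * J (k - 2)) :
    Matrix.det (Matrix.of fun i j : Fin n => J (((j : ℕ) + n - (i : ℕ)) % n + 1)) =
      (1 - J n) * (1 - J (n + 1)) ^ (n - 2) +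
        ∑ k ∈ Finset.Icc 2 (n - 1),
          (J (k + 1) - J k) * (1 - J (n + 1)) ^ (k - 2) * (2 * J n) ^ (n - k) := by
  have hJn : J (n - 1 + 1) = J n := by rw [Nat.sub_add_cancel (by omega)]
  refine (Matrix.det_circulant_of_linearRecurrence (by omega) (fun d => J (d + 1)) 1 2
    (1 - J (n + 1)) (2 * J n) (fun d _ => by simpa using hrec (d + 3) le_add_self) ?_ ?_).trans ?_
  · rw [hrec (n + 1) (by omega), Nat.add_sub_cancel, show n + 1 - 2 = n - 2 + 1 by omega, hJn,
      zero_add, hJ1]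
    ring
  · rw [hJn, zero_add, hJ1, hJ2]
    ring
  · simp only [zero_add, hJ1, hJ2, hJn, one_mul]
    congr 1
    refine sum_congr rfl fun k hk => ?_
    rw [Nat.sub_add_cancel (by simp at hk; omega)]
end

section
/- Let jₖ denote the Jacobsthal–Lucas numbers with j₁ = 1, j₂ = 3 and jₖ = j_{k-1} + 2j_{k-2} for k ≥ 3, and let n > 3. Then det(circ(j₁, j₂, …, jₙ)) = (1 - 3jₙ)(1 - j_{n+1})^{n-2} + Σ_{k=2}^{n-1} (j_{k+1} - 3jₖ)(1 - j_{n+1})^{k-2}(2jₙ - 2)^{n-k}. -/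
private lemma det_aux' (m : ℕ) (M : Matrix (Fin (m+2)) (Fin (m+2)) ℝ) (x : ℝ)
    (h : ∀ i l : Fin (m+2), (i:ℕ) < m → M i l = if l = i then x else 0) :
    M.det = x^m * (M ⟨m, by omega⟩ ⟨m, by omega⟩ * M ⟨m+1, by omega⟩ ⟨m+1, by omega⟩
      - M ⟨m, by omega⟩ ⟨m+1, by omega⟩ * M ⟨m+1, by omega⟩ ⟨m, by omega⟩) := by
  rw [← Matrix.det_submatrix_equiv_self finSumFinEquiv M]
  have hM : M.submatrix (finSumFinEquiv (n := 2)) finSumFinEquiv =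
      Matrix.fromBlocks (x • (1 : Matrix (Fin m) (Fin m) ℝ)) 0
        (Matrix.of fun i j => M (finSumFinEquiv (Sum.inr i)) (finSumFinEquiv (Sum.inl j)))
        (Matrix.of fun i j => M (finSumFinEquiv (Sum.inr i)) (finSumFinEquiv (Sum.inr j))) := by
    ext i j
    cases i with
    | inl i =>
      cases j with
      | inl jj =>
        simp only [Matrix.submatrix_apply, finSumFinEquiv_apply_left,
          Matrix.fromBlocks_apply₁₁, Matrix.smul_apply, Matrix.one_apply, smul_eq_mul]
        rw [h _ _ (by simpa using i.isLt)]
        by_cases hij : i = jj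
        · subst hij; simp
        · rw [if_neg (by simp [Fin.ext_iff]; omega), if_neg (by omega : ¬ i = jj), mul_zero]
      | inr jj =>
        simp only [Matrix.submatrix_apply, finSumFinEquiv_apply_left,
          finSumFinEquiv_apply_right, Matrix.fromBlocks_apply₁₂, Matrix.zero_apply]
        rw [h _ _ (by simpa using i.isLt)]
        rw [if_neg (by simp [Fin.ext_iff]; omega)]
    | inr i =>
      cases j with
      | inl jj => simp [Matrix.submatrix_apply]
      | inr jj => simp [Matrix.submatrix_apply]
  rw [hM, Matrix.det_fromBlocks_zero₁₂, Matrix.det_smul, Matrix.det_one, Matrix.det_fin_two]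
  have h0 : (finSumFinEquiv (Sum.inr (0 : Fin 2)) : Fin (m+2)) = ⟨m, by omega⟩ := by
    simp [finSumFinEquiv_apply_right, Fin.ext_iff]
  have h1 : (finSumFinEquiv (Sum.inr (1 : Fin 2)) : Fin (m+2)) = ⟨m+1, by omega⟩ := by
    simp [finSumFinEquiv_apply_right, Fin.ext_iff]
  simp only [Matrix.of_apply, h0, h1, Fintype.card_fin, mul_one]

private lemma det_aux_s5 (n m : ℕ) (hmn : m + 2 = n) (M : Matrix (Fin n) (Fin n) ℝ) (x : ℝ)
    (h : ∀ i l : Fin n, (i:ℕ) < m → M i l = if l = i then x else 0)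
    (hp : m < n) (hq : m + 1 < n) :
    M.det = x^m * (M ⟨m, hp⟩ ⟨m, hp⟩ * M ⟨m+1, hq⟩ ⟨m+1, hq⟩
      - M ⟨m, hp⟩ ⟨m+1, hq⟩ * M ⟨m+1, hq⟩ ⟨m, hp⟩) := by
  subst hmn
  exact det_aux' m M x h

/-- Bozkurt–Tam: determinant of the circulant matrix of the first `n`
Jacobsthal–Lucas numbers. -/
theorem det_circulant_jacobsthal_lucas (n : ℕ) (hn : 3 < n) (j : ℕ → ℝ)
    (hj1 : j 1 = 1) (hj2 : j 2 = 3)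
    (hrec : ∀ k, 3 ≤ k → j k = j (k - 1) + 2 * j (k - 2)) :
    Matrix.det (Matrix.of fun i l : Fin n => j (((l : ℕ) + n - (i : ℕ)) % n + 1)) =
      (1 - 3 * j n) * (1 - j (n + 1)) ^ (n - 2) +
        ∑ k ∈ Finset.Icc 2 (n - 1),
          (j (k + 1) - 3 * j k) * (1 - j (n + 1)) ^ (k - 2) * (2 * j n - 2) ^ (n - k) := by
  obtain ⟨m, rfl⟩ : ∃ m, n = m + 4 := ⟨n - 4, by omega⟩
  clear hn
  -- basic facts about j
  have hjge : ∀ k, 1 ≤ k → (1:ℝ) ≤ j k := by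
    intro k
    induction k using Nat.strong_induction_on with
    | _ k ih =>
      intro hk
      match k, hk with
      | 1, _ => rw [hj1]
      | 2, _ => rw [hj2]; norm_num
      | (k+3), _ =>
        rw [hrec (k+3) (by omega), show k+3-1 = k+2 from by omega,
          show k+3-2 = k+1 from by omega]
        have h1 := ih (k+2) (by omega) (by omega)
        have h2 := ih (k+1) (by omega) (by omega)
        linarith
  have hjn1 : j (m+4+1) = j (m+4) + 2 * j (m+3) := by
    have h := hrec (m+4+1) (by omega)
    rw [show m+4+1-1 = m+4 from by omega, show m+4+1-2 = m+3 from by omega] at h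
    exact h
  set x : ℝ := 1 - j (m+4+1) with hxdef
  set w : ℝ := 2 * j (m+4) - 2 with hwdef
  have hx0 : x ≠ 0 := by
    have h1 := hjge (m+4) (by omega)
    have h2 := hjge (m+3) (by omega)
    rw [hxdef, hjn1]
    intro hc; linarith
  set r : ℝ := w / x with hrdef
  have hxr : x * r = w := by rw [hrdef]; field_simp
  clear_value x w r
  -- matrices
  set D : Matrix (Fin (m+4)) (Fin (m+4)) ℝ :=
    Matrix.of fun i l : Fin (m+4) => j (((l : ℕ) + (m+4) - (i : ℕ)) % (m+4) + 1) with hD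
  set E : Matrix (Fin (m+4)) (Fin (m+4)) ℝ := Matrix.of fun i c =>
    (if c = i then (1:ℝ) else 0) +
    ((if (i:ℕ) ≤ m+1 ∧ (c:ℕ) = (i:ℕ)+1 then (-1:ℝ) else 0) +
     (if (i:ℕ) ≤ m+1 ∧ (c:ℕ) = (i:ℕ)+2 then (-2:ℝ) else 0)) with hE
  set P : Matrix (Fin (m+4)) (Fin (m+4)) ℝ := Matrix.of fun c l =>
    if (c:ℕ) ≤ (l:ℕ) then r ^ ((l:ℕ) - (c:ℕ)) else 0 with hP
  clear_value D E P
  have hdetE : E.det = 1 := by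
    rw [Matrix.det_of_upperTriangular (by
      intro i c hci
      have hci' : (c:ℕ) < (i:ℕ) := hci
      simp only [hE, Matrix.of_apply, Fin.ext_iff]
      split_ifs with g1 g2 g3 g4 g5 g6 g7 g8 g9 g10 g11 g12 g13 g14 g15 g16 g17 g18 g19 g20
      all_goals try (exfalso; omega)
      all_goals ring)]
    refine Finset.prod_eq_one fun i _ => ?_
    simp only [hE, Matrix.of_apply, Fin.ext_iff]
    split_ifs with g1 g2 g3 g4 g5 g6 g7 g8 g9 g10 g11 g12 g13 g14 g15 g16 g17 g18 g19 g20
    all_goals try (exfalso; omega)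
    all_goals ring
  have hdetP : P.det = 1 := by
    rw [Matrix.det_of_upperTriangular (by
      intro c l hlc
      have hlc' : (l:ℕ) < (c:ℕ) := hlc
      simp only [hP, Matrix.of_apply]
      rw [if_neg (show ¬((c:ℕ) ≤ (l:ℕ)) from by omega)])]
    refine Finset.prod_eq_one fun c _ => ?_
    simp only [hP, Matrix.of_apply, if_pos le_rfl, Nat.sub_self, pow_zero]
  -- the numeric evaluation of row combinations
  have hval : ∀ (iv cv : ℕ), iv ≤ m+1 → cv < m+4 →
      j ((cv + (m+4) - iv) % (m+4) + 1) - j ((cv + (m+4) - (iv+1)) % (m+4) + 1)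
        - 2 * j ((cv + (m+4) - (iv+2)) % (m+4) + 1)
      = if cv = iv then x else if cv = iv+1 then -w else 0 := by
    intro iv cv hi hc
    by_cases h1 : cv = iv
    · subst h1
      rw [show cv + (m+4) - cv = m+4 from by omega, Nat.mod_self,
        show cv + (m+4) - (cv+1) = m+3 from by omega, Nat.mod_eq_of_lt (by omega),
        show cv + (m+4) - (cv+2) = m+2 from by omega, Nat.mod_eq_of_lt (by omega),
        if_pos rfl]
      rw [hj1, hxdef, hjn1]; ring
    · rw [if_neg h1]
      by_cases h2 : cv = iv + 1
      · subst h2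
        rw [show iv+1 + (m+4) - iv = (m+4)+1 from by omega, Nat.add_mod_left,
          Nat.mod_eq_of_lt (by omega),
          show iv+1 + (m+4) - (iv+1) = m+4 from by omega, Nat.mod_self,
          show iv+1 + (m+4) - (iv+2) = m+3 from by omega, Nat.mod_eq_of_lt (by omega),
          if_pos rfl]
        rw [hj1, hj2, hwdef]; ring
      · rw [if_neg h2]
        rcases lt_or_ge cv iv with h3 | h3
        · have ha1 : cv + (m+4) - iv < m+4 := by omega
          have ha3 : 3 ≤ cv + (m+4) - iv := by omega
          rw [Nat.mod_eq_of_lt ha1,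
            show cv + (m+4) - (iv+1) = (cv + (m+4) - iv) - 1 from by omega,
            Nat.mod_eq_of_lt (by omega),
            show cv + (m+4) - (iv+2) = (cv + (m+4) - iv) - 2 from by omega,
            Nat.mod_eq_of_lt (by omega)]
          have hr := hrec ((cv + (m+4) - iv) + 1) (by omega)
          rw [show (cv + (m+4) - iv) + 1 - 1 = cv + (m+4) - iv from by omega,
            show (cv + (m+4) - iv) + 1 - 2 = (cv + (m+4) - iv) - 1 from by omega] at hr
          rw [show (cv + (m+4) - iv) - 1 + 1 = cv + (m+4) - iv from by omega,
            show (cv + (m+4) - iv) - 2 + 1 = (cv + (m+4) - iv) - 1 from by omega, hr]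
          ring
        · have h4 : iv + 2 ≤ cv := by omega
          rw [show cv + (m+4) - iv = (m+4) + (cv - iv) from by omega, Nat.add_mod_left,
            Nat.mod_eq_of_lt (by omega),
            show cv + (m+4) - (iv+1) = (m+4) + (cv - iv - 1) from by omega, Nat.add_mod_left,
            Nat.mod_eq_of_lt (by omega),
            show cv + (m+4) - (iv+2) = (m+4) + (cv - iv - 2) from by omega, Nat.add_mod_left,
            Nat.mod_eq_of_lt (by omega)]
          have hr := hrec ((cv - iv) + 1) (by omega)
          rw [show (cv - iv) + 1 - 1 = cv - iv from by omega,
            show (cv - iv) + 1 - 2 = cv - iv - 1 from by omega] at hr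
          rw [show cv - iv - 1 + 1 = cv - iv from by omega,
            show cv - iv - 2 + 1 = cv - iv - 1 from by omega, hr]
          ring
  -- rows of E * D
  have hED : ∀ (i c : Fin (m+4)), (i:ℕ) ≤ m+1 →
      (E * D) i c = if c = i then x else if (c:ℕ) = (i:ℕ)+1 then -w else 0 := by
    intro i c hi
    rw [Matrix.mul_apply]
    have hi1 : (i:ℕ)+1 < m+4 := by omega
    have hi2 : (i:ℕ)+2 < m+4 := by omega
    have split : ∀ b : Fin (m+4), E i b * D b c =
        (if b = i then D b c else 0) +
        ((if b = (⟨(i:ℕ)+1, hi1⟩ : Fin (m+4)) then -(D b c) else 0) +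
         (if b = (⟨(i:ℕ)+2, hi2⟩ : Fin (m+4)) then -(2 * D b c) else 0)) := by
      intro b
      simp only [hE, Matrix.of_apply, Fin.ext_iff, Fin.val_mk]
      split_ifs with g1 g2 g3 g4 g5 g6 g7 g8 g9 g10 g11 g12 g13 g14 g15 g16 g17 g18 g19 g20
      all_goals try (exfalso; omega)
      all_goals ring
    rw [Finset.sum_congr rfl fun b _ => split b, Finset.sum_add_distrib,
      Finset.sum_add_distrib, Finset.sum_ite_eq', Finset.sum_ite_eq', Finset.sum_ite_eq']
    simp only [Finset.mem_univ, if_true]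
    have := hval (i:ℕ) (c:ℕ) hi c.isLt
    simp only [hD, Matrix.of_apply, Fin.val_mk, Fin.ext_iff]
    linarith [this]
  -- rows < m+2 of E * D * P
  have hB1 : ∀ (i l : Fin (m+4)), (i:ℕ) < m+2 →
      (E * D * P) i l = if l = i then x else 0 := by
    intro i l hi
    rw [Matrix.mul_apply]
    have hi1 : (i:ℕ)+1 < m+4 := by omega
    have split : ∀ c : Fin (m+4), (E * D) i c * P c l =
        (if c = i then x * P c l else 0) +
        (if c = (⟨(i:ℕ)+1, hi1⟩ : Fin (m+4)) then -w * P c l else 0) := by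
      intro c
      rw [hED i c (by omega)]
      simp only [Fin.ext_iff, Fin.val_mk]
      split_ifs with g1 g2 g3 g4 g5 g6 g7 g8 g9 g10 g11 g12 g13 g14 g15 g16 g17 g18 g19 g20
      all_goals try (exfalso; omega)
      all_goals ring
    rw [Finset.sum_congr rfl fun c _ => split c, Finset.sum_add_distrib,
      Finset.sum_ite_eq', Finset.sum_ite_eq']
    simp only [Finset.mem_univ, if_true]
    simp only [hP, Matrix.of_apply, Fin.val_mk, Fin.ext_iff]
    split_ifs with g1 g2 g3 g4 g5 g6 g7 g8 g9 g10 g11 g12 g13 g14 g15 g16 g17 g18 g19 g20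
    all_goals try (exfalso; omega)
    all_goals try ring
    all_goals try (rw [show (l:ℕ) - (i:ℕ) = 0 from by omega, pow_zero]; ring)
    all_goals
      rw [show (l:ℕ) - (i:ℕ) = ((l:ℕ) - ((i:ℕ)+1)) + 1 from by omega, pow_succ]
      try rw [show (l:ℕ) - (1 + (i:ℕ)) = (l:ℕ) - ((i:ℕ)+1) from by omega]
      linear_combination (r ^ ((l:ℕ) - ((i:ℕ)+1))) * hxr
  -- bottom rows of E * D
  have hED2 : ∀ (i : Fin (m+4)), m+2 ≤ (i:ℕ) → ∀ c : Fin (m+4), (E * D) i c = D i c := by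
    intro i hi c
    rw [Matrix.mul_apply]
    have split : ∀ b : Fin (m+4), E i b * D b c = if b = i then D b c else 0 := by
      intro b
      simp only [hE, Matrix.of_apply]
      split_ifs with g1 g2 g3 g4 g5 g6 g7 g8 g9 g10 g11 g12 g13 g14 g15 g16 g17 g18 g19 g20
      all_goals try (exfalso; omega)
      all_goals ring
    rw [Finset.sum_congr rfl fun b _ => split b, Finset.sum_ite_eq']
    simp
  -- bottom rows of E * D * P
  have hBot : ∀ (i : Fin (m+4)), m+2 ≤ (i:ℕ) → ∀ l : Fin (m+4),
      (E * D * P) i l = ∑ c ∈ Finset.range ((l:ℕ)+1),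
        j ((c + (m+4) - (i:ℕ)) % (m+4) + 1) * r ^ ((l:ℕ) - c) := by
    intro i hi l
    rw [Matrix.mul_apply]
    have hsummand : ∀ c : Fin (m+4), (E * D) i c * P c l =
        (if (c:ℕ) ≤ (l:ℕ) then
          j (((c:ℕ) + (m+4) - (i:ℕ)) % (m+4) + 1) * r ^ ((l:ℕ) - (c:ℕ)) else 0) := by
      intro c
      rw [hED2 i hi c]
      simp only [hD, hP, Matrix.of_apply, mul_ite, mul_zero]
    rw [Finset.sum_congr rfl fun c _ => hsummand c]
    rw [Fin.sum_univ_eq_sum_range (fun cv => if cv ≤ (l:ℕ) then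
      j ((cv + (m+4) - (i:ℕ)) % (m+4) + 1) * r ^ ((l:ℕ) - cv) else 0) (m+4)]
    rw [← Finset.sum_subset (Finset.range_subset_range.2 (by omega : (l:ℕ)+1 ≤ m+4))
      (fun cv _ hn => by rw [if_neg (by simp only [Finset.mem_range] at hn; omega)])]
    exact Finset.sum_congr rfl fun cv hc =>
      if_pos (by simp only [Finset.mem_range] at hc; omega)
  -- determinant transfer
  have hdet : D.det = (E * D * P).det := by
    rw [Matrix.det_mul, Matrix.det_mul, hdetE, hdetP]; ring
  rw [hdet, det_aux_s5 (m+4) (m+2) (by omega) _ x hB1 (by omega) (by omega)]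
  -- the four corner entries
  set U2 : ℝ := ∑ c ∈ Finset.range (m+3), j ((c+2) % (m+4) + 1) * r ^ (m+2 - c) with hU2
  set V2 : ℝ := ∑ c ∈ Finset.range (m+3), j ((c+1) % (m+4) + 1) * r ^ (m+2 - c) with hV2
  have hBpp : (E * D * P) ⟨m+2, by omega⟩ ⟨m+2, by omega⟩ = U2 := by
    rw [hBot _ (by simp) _, hU2]
    refine Finset.sum_congr rfl fun c hc => ?_
    simp only [Fin.val_mk]
    rw [show c + (m+4) - (m+2) = c + 2 from by omega]
  have hBqp : (E * D * P) ⟨m+3, by omega⟩ ⟨m+2, by omega⟩ = V2 := by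
    rw [hBot _ (by simp) _, hV2]
    refine Finset.sum_congr rfl fun c hc => ?_
    simp only [Fin.val_mk]
    rw [show c + (m+4) - (m+3) = c + 1 from by omega]
  have hBpq : (E * D * P) ⟨m+2, by omega⟩ ⟨m+3, by omega⟩ = U2 * r + 3 := by
    rw [hBot _ (by simp) _]
    simp only [Fin.val_mk]
    rw [show m+3+1 = (m+3)+1 from rfl, Finset.sum_range_succ,
      show m+3 + (m+4) - (m+2) = (m+4)+1 from by omega, Nat.add_mod_left,
      Nat.mod_eq_of_lt (by omega), Nat.sub_self, pow_zero, hj2]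
    have hinit : ∑ c ∈ Finset.range (m+3),
        j ((c + (m+4) - (m+2)) % (m+4) + 1) * r ^ (m+3 - c) = U2 * r := by
      rw [hU2, Finset.sum_mul]
      refine Finset.sum_congr rfl fun c hc => ?_
      simp only [Finset.mem_range] at hc
      rw [show c + (m+4) - (m+2) = c + 2 from by omega,
        show m+3-c = (m+2-c)+1 from by omega, pow_succ]
      ring
    rw [hinit]; ring
  have hBqq : (E * D * P) ⟨m+3, by omega⟩ ⟨m+3, by omega⟩ = V2 * r + 1 := by
    rw [hBot _ (by simp) _]
    simp only [Fin.val_mk]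
    rw [show m+3+1 = (m+3)+1 from rfl, Finset.sum_range_succ,
      show m+3 + (m+4) - (m+3) = m+4 from by omega, Nat.mod_self, Nat.sub_self,
      pow_zero, hj1]
    have hinit : ∑ c ∈ Finset.range (m+3),
        j ((c + (m+4) - (m+3)) % (m+4) + 1) * r ^ (m+3 - c) = V2 * r := by
      rw [hV2, Finset.sum_mul]
      refine Finset.sum_congr rfl fun c hc => ?_
      simp only [Finset.mem_range] at hc
      rw [show c + (m+4) - (m+3) = c + 1 from by omega,
        show m+3-c = (m+2-c)+1 from by omega, pow_succ]
      ring
    rw [hinit]; ring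
  rw [hBpp, hBqq, hBpq, hBqp]
  have hcollapse : U2 * (V2 * r + 1) - (U2 * r + 3) * V2 = U2 - 3 * V2 := by ring
  rw [hcollapse]
  -- final summation identity
  have hpow : ∀ c, c < m+3 → x ^ (m+2) * r ^ (m+2-c) = x ^ c * w ^ (m+2-c) := by
    intro c hc
    have h1 : x ^ (m+2) = x ^ c * x ^ (m+2-c) := by
      rw [← pow_add]; congr 1; omega
    rw [hrdef, div_pow, h1]
    have h2 : x ^ (m+2-c) ≠ 0 := pow_ne_zero _ hx0
    field_simp
  have hexpand : x ^ (m+2) * (U2 - 3 * V2) = ∑ c ∈ Finset.range (m+3),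
      (j ((c+2) % (m+4) + 1) - 3 * j ((c+1) % (m+4) + 1)) * (x ^ c * w ^ (m+2-c)) := by
    have hsub : U2 - 3 * V2 = ∑ c ∈ Finset.range (m+3),
        (j ((c+2) % (m+4) + 1) * r ^ (m+2-c) - 3 * (j ((c+1) % (m+4) + 1) * r ^ (m+2-c))) := by
      rw [hU2, hV2, Finset.mul_sum, ← Finset.sum_sub_distrib]
    rw [hsub, Finset.mul_sum]
    refine Finset.sum_congr rfl fun c hc => ?_
    simp only [Finset.mem_range] at hc
    rw [← hpow c hc]
    ring
  rw [hexpand, Finset.sum_range_succ,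
    show m+2+2 = (m+4) from by omega, Nat.mod_self,
    show m+2+1 = m+3 from by omega, Nat.mod_eq_of_lt (by omega), hj1,
    Nat.sub_self, pow_zero]
  -- rewrite the RHS sum
  rw [show m+4-1 = (m+2)+1 from by omega, ← Finset.Ico_add_one_right_eq_Icc,
    Finset.sum_Ico_eq_sum_range]
  rw [show (m+2)+1+1-2 = m+2 from by omega]
  have hrhs : ∀ c ∈ Finset.range (m+2),
      (j (2+c+1) - 3 * j (2+c)) * x ^ (2+c-2) * w ^ (m+4-(2+c)) =
      (j ((c+2) % (m+4) + 1) - 3 * j ((c+1) % (m+4) + 1)) * (x ^ c * w ^ (m+2-c)) := by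
    intro c hc
    simp only [Finset.mem_range] at hc
    rw [show m+4-(2+c) = m+2-c from by omega, show 2+c-2 = c from by omega,
      show 2+c+1 = c+3 from by omega, show 2+c = c+2 from by omega,
      Nat.mod_eq_of_lt (by omega : c+2 < m+4), Nat.mod_eq_of_lt (by omega : c+1 < m+4),
      show c+2+1 = c+3 from by omega]
    ring
  rw [Finset.sum_congr rfl hrhs]
  rw [show m+3+1 = m+4 from by omega]
  ring
end

section
/- Let α₁, α₂, α₃ be real numbers with α₁ ≠ 0, α₃ ≠ 0 and α₂² - 4α₁α₃ < 0 (so the quadratic α₁r² + α₂r + α₃ has distinct complex roots λ, μ). Define sequences b⁽¹⁾ and b⁽²⁾ by the common recurrence b_s = -(α₂/α₁)b_{s-1} - (α₃/α₁)b_{s-2} for s ≥ 3, with initial conditions b₁⁽¹⁾ = 1, b₂⁽¹⁾ = 0 and b₁⁽²⁾ = 0, b₂⁽²⁾ = 1. Then for all k ≥ t ≥ 2: b_k⁽¹⁾·b_t⁽²⁾ - b_t⁽¹⁾·b_k⁽²⁾ = (α₃/α₁)^{t-2} · b_{k-t+2}⁽¹⁾. -/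
/-- For the sequences `b⁽¹⁾`, `b⁽²⁾` defined by the common recurrence
`b_s = -(α₂/α₁) b_{s-1} - (α₃/α₁) b_{s-2}` with Kronecker-delta initial conditions,
one has `b_k⁽¹⁾ b_t⁽²⁾ - b_t⁽¹⁾ b_k⁽²⁾ = (α₃/α₁)^{t-2} b_{k-t+2}⁽¹⁾` for `k ≥ t ≥ 2`. -/
theorem b_seq_wronskian_identity (α₁ α₂ α₃ : ℝ) (h1 : α₁ ≠ 0) (h3 : α₃ ≠ 0)
    (hdisc : α₂ ^ 2 - 4 * α₁ * α₃ < 0) (b₁ b₂ : ℕ → ℝ)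
    (hb₁1 : b₁ 1 = 1) (hb₁2 : b₁ 2 = 0) (hb₂1 : b₂ 1 = 0) (hb₂2 : b₂ 2 = 1)
    (hrec₁ : ∀ s, 3 ≤ s → b₁ s = -(α₂ / α₁) * b₁ (s - 1) - (α₃ / α₁) * b₁ (s - 2))
    (hrec₂ : ∀ s, 3 ≤ s → b₂ s = -(α₂ / α₁) * b₂ (s - 1) - (α₃ / α₁) * b₂ (s - 2)) :
    ∀ k t, 2 ≤ t → t ≤ k →
      b₁ k * b₂ t - b₁ t * b₂ k = (α₃ / α₁) ^ (t - 2) * b₁ (k - t + 2) := by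
  set c := α₃ / α₁ with hc
  have hb3 : b₁ 3 = -c := by
    have h := hrec₁ 3 (by norm_num)
    norm_num [hb₁1, hb₁2] at h
    exact h
  -- adjacent Wronskian
  have hg : ∀ t, 2 ≤ t → b₁ (t + 1) * b₂ t - b₁ t * b₂ (t + 1) = -c ^ (t - 1) := by
    intro t ht
    induction t with
    | zero => omega
    | succ n ih =>
      rcases Nat.lt_or_ge n 2 with h | h
      · have hn : n = 1 := by omega
        subst hn
        simp only [show (1:ℕ)+1 = 2 from rfl, show (2:ℕ)+1 = 3 from rfl,
          show (2:ℕ)-1 = 1 from rfl]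
        rw [hb3, hb₂2, hb₁2]
        ring
      · have ihn := ih (by omega)
        have e1 := hrec₁ (n + 2) (by omega)
        have e2 := hrec₂ (n + 2) (by omega)
        simp only [show n+2-1 = n+1 from rfl, show n+2-2 = n from rfl] at e1 e2
        have hp : c ^ n = c * c ^ (n - 1) := by
          rw [← pow_succ']
          congr 1
          omega
        show b₁ (n + 2) * b₂ (n + 1) - b₁ (n + 1) * b₂ (n + 2) = -c ^ n
        rw [e1, e2, hp]
        linear_combination c * ihn
  intro k t ht htk
  induction k using Nat.strong_induction_on with
  | _ k ih =>
    rcases Nat.lt_or_ge k (t + 2) with hk | hk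
    · rcases Nat.lt_or_ge k (t + 1) with hk1 | hk1
      · -- k = t
        have hkt : k = t := by omega
        subst hkt
        have : k - k + 2 = 2 := by omega
        rw [this, hb₁2]
        ring
      · -- k = t + 1
        have hkt : k = t + 1 := by omega
        subst hkt
        have h1' : t + 1 - t + 2 = 3 := by omega
        rw [h1', hb3, hg t ht]
        have : c ^ (t - 1) = c ^ (t - 2) * c := by
          rw [← pow_succ]
          congr 1
          omega
        rw [this]
        ring
    · -- k ≥ t + 2
      obtain ⟨d, rfl⟩ : ∃ d, k = t + d + 2 := ⟨k - t - 2, by omega⟩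
      have e1 := hrec₁ (t + d + 2) (by omega)
      have e2 := hrec₂ (t + d + 2) (by omega)
      simp only [show t+d+2-1 = t+d+1 from rfl, show t+d+2-2 = t+d from rfl] at e1 e2
      have ih1 := ih (t + d + 1) (by omega) (by omega)
      have ih2 := ih (t + d) (by omega) (by omega)
      have r1 : t + d + 1 - t + 2 = d + 3 := by omega
      have r2 : t + d - t + 2 = d + 2 := by omega
      have r3 : t + d + 2 - t + 2 = d + 4 := by omega
      rw [r1] at ih1
      rw [r2] at ih2
      rw [r3]
      have e3 := hrec₁ (d + 4) (by omega)
      simp only [show d+4-1 = d+3 from rfl, show d+4-2 = d+2 from rfl] at e3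
      rw [e1, e2, e3]
      linear_combination (-(α₂ / α₁)) * ih1 + (-c) * ih2
end

section
/- Let {aₖ} be the tribonacci sequence (a₀ = 0, a₁ = a₂ = 1, a₃ = 2). For indices 2 ≤ i, j ≤ n-3, the 3×3 determinant Δ(i,j) = det [[1, a_i, a_j], [1, a_{i+1}, a_{j+1}], [2, a_{i+2}, a_{j+2}]] equals a_{i-2}·a_{j-1} - a_{i-1}·a_{j-2}. -/
/-- For the tribonacci sequence, the 3×3 determinant
`Δ(i,j) = det [[1, aᵢ, aⱼ], [1, a_{i+1}, a_{j+1}], [2, a_{i+2}, a_{j+2}]]`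
equals `a_{i-2} a_{j-1} - a_{i-1} a_{j-2}` for `2 ≤ i, j ≤ n - 3`. -/
theorem tribonacci_delta (a : ℕ → ℝ)
    (h0 : a 0 = 0) (h1 : a 1 = 1) (h2 : a 2 = 1) (h3 : a 3 = 2)
    (hrec : ∀ k, 4 ≤ k → a k = a (k - 1) + a (k - 2) + a (k - 3))
    (n i j : ℕ) (hi2 : 2 ≤ i) (hin : i ≤ n - 3) (hj2 : 2 ≤ j) (hjn : j ≤ n - 3) :
    Matrix.det !![1, a i, a j; 1, a (i + 1), a (j + 1); 2, a (i + 2), a (j + 2)] =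
      a (i - 2) * a (j - 1) - a (i - 1) * a (j - 2) := by
  have key : ∀ k, 2 ≤ k → a (k + 1) = a k + a (k - 1) + a (k - 2) := by
    intro k hk
    rcases Nat.lt_or_ge k 3 with h | h
    · have hk2 : k = 2 := by omega
      subst hk2
      norm_num [h0, h1, h2, h3]
    · have := hrec (k + 1) (by omega)
      simpa [Nat.add_sub_cancel, show k + 1 - 2 = k - 1 from by omega,
        show k + 1 - 3 = k - 2 from by omega] using this
  have e1 := key i hi2
  have e2 : a (i + 2) = a (i + 1) + a i + a (i - 1) := by
    have := key (i + 1) (by omega)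
    simpa [show i + 1 - 1 = i from by omega, show i + 1 - 2 = i - 1 from by omega]
      using this
  have e3 := key j hj2
  have e4 : a (j + 2) = a (j + 1) + a j + a (j - 1) := by
    have := key (j + 1) (by omega)
    simpa [show j + 1 - 1 = j from by omega, show j + 1 - 2 = j - 1 from by omega]
      using this
  simp [Matrix.det_fin_three]
  rw [e2, e4, e1, e3]
  ring
end
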